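/- arXiv:2505.18443 — 3 statements merged into one kernel-verified Lean document; each statement's English description precedes it below -/
import Mathlib

section
/- Let $x^{v_+} - x^{v_-}$ be an element of a reduced Gröbner basis of the toric ideal $I_A$, with $v = v_+ - v_- \in \ker_{\mathbb{Z}}(A)$, and let $\rho \in \{+1,-1\}^n$ be a sign pattern with $v \in H_\rho$. Then $v$ can be written as $v = \lambda_1 u_1 + \cdots + \lambda_{n-d} u_{n-d}$ where $u_1,\ldots,u_{n-d}$ are circuits of $A$ lying in $H_\rho$ and $0 \le \lambda_i \le 1$ for every $i$. -/
open MvPolynomial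

noncomputable section

universe u

variable {α β : Type*} [Fintype α] [Fintype β]

/-- The Laurent monomial `t^a` in the group algebra `ℂ[ℤ^α]` (the Laurent polynomial ring). -/
def laurentMonomial (a : α → ℤ) : AddMonoidAlgebra ℂ (α →₀ ℤ) :=
  AddMonoidAlgebra.single (Finsupp.equivFunOnFinite.symm a) 1

/-- The monomial map `φ_A : x_j ↦ t^{a_j}` where `a_j` is the `j`-th column of `A`. -/
def phiMap (A : Matrix α β ℤ) : MvPolynomial β ℂ →ₐ[ℂ] AddMonoidAlgebra ℂ (α →₀ ℤ) :=
  MvPolynomial.aeval fun j => laurentMonomial fun i => A i j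

/-- The toric ideal `I_A`, the kernel of `φ_A`. -/
def toricIdeal (A : Matrix α β ℤ) : Ideal (MvPolynomial β ℂ) :=
  RingHom.ker (phiMap A).toRingHom

/-- The leading monomial (exponent vector) of `f` with respect to a monomial order. -/
def leadMon (m : MonomialOrder β) (f : MvPolynomial β ℂ) : β →₀ ℕ :=
  m.toSyn.symm (f.support.sup m.toSyn)

/-- The leading coefficient of `f` with respect to a monomial order. -/
def leadCoeff (m : MonomialOrder β) (f : MvPolynomial β ℂ) : ℂ := f.coeff (leadMon m f)

/-- `G` is a Gröbner basis of `I`: a finite set of nonzero elements of `I` whose leading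
monomials generate the initial ideal of `I` (i.e. the leading monomial of every nonzero
element of `I` is divisible by the leading monomial of some element of `G`). -/
def IsGroebnerBasis (m : MonomialOrder β) (I : Ideal (MvPolynomial β ℂ))
    (G : Set (MvPolynomial β ℂ)) : Prop :=
  G.Finite ∧ (∀ g ∈ G, g ∈ I ∧ g ≠ 0) ∧
    ∀ f ∈ I, f ≠ 0 → ∃ g ∈ G, leadMon m g ≤ leadMon m f

/-- `G` is the reduced Gröbner basis of `I`: a Gröbner basis, all of whose elements are monic,
such that no monomial occurring in an element of `G` is divisible by the leading monomial of
another element of `G`. -/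
def IsReducedGroebnerBasis (m : MonomialOrder β) (I : Ideal (MvPolynomial β ℂ))
    (G : Set (MvPolynomial β ℂ)) : Prop :=
  IsGroebnerBasis m I G ∧ (∀ g ∈ G, leadCoeff m g = 1) ∧
    ∀ g ∈ G, ∀ g' ∈ G, g' ≠ g → ∀ c ∈ g.support, ¬ leadMon m g' ≤ c

/-- The positive part `w⁺` of an integer vector, as an exponent vector. -/
def posPart (w : β → ℤ) : β →₀ ℕ := Finsupp.equivFunOnFinite.symm fun i => (w i).toNat

/-- The negative part `w⁻` of an integer vector, as an exponent vector. -/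
def negPart (w : β → ℤ) : β →₀ ℕ := Finsupp.equivFunOnFinite.symm fun i => (-(w i)).toNat

/-- The binomial `x^{w⁺} - x^{w⁻}` associated to an integer vector `w`. -/
def binom (w : β → ℤ) : MvPolynomial β ℂ := monomial (posPart w) 1 - monomial (negPart w) 1

/-- A circuit of `A`: a nonzero integer vector in `ker A` with coprime entries whose support
is minimal with respect to inclusion among supports of nonzero elements of `ker A`. -/
def IsCircuit (A : Matrix α β ℤ) (u : β → ℤ) : Prop :=
  u ≠ 0 ∧ A.mulVec u = 0 ∧ Finset.gcd Finset.univ u = 1 ∧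
    ∀ v : β → ℤ, v ≠ 0 → A.mulVec v = 0 →
      {i | v i ≠ 0} ⊆ {i | u i ≠ 0} → {i | v i ≠ 0} = {i | u i ≠ 0}

/-- A sign pattern `ρ ∈ {+1,-1}^n`. -/
def IsSignPattern (ρ : β → ℤ) : Prop := ∀ i, ρ i = 1 ∨ ρ i = -1

/-- Membership in `H_ρ = ℝ^n_ρ ∩ ker_ℤ(A)`: integer kernel elements conforming to the sign
pattern `ρ`. -/
def MemH (A : Matrix α β ℤ) (ρ : β → ℤ) (w : β → ℤ) : Prop :=
  A.mulVec w = 0 ∧ ∀ i, 0 ≤ ρ i * w i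

/-- `w` belongs to the Hilbert basis of the pointed cone `H_ρ`: it is a nonzero element of
`H_ρ` which cannot be written as the sum of two nonzero elements of `H_ρ` (equivalently, it
belongs to the unique minimal generating set of the monoid `H_ρ`). -/
def IsHilbertBasisElem (A : Matrix α β ℤ) (ρ : β → ℤ) (w : β → ℤ) : Prop :=
  MemH A ρ w ∧ w ≠ 0 ∧
    ¬ ∃ a b : β → ℤ, MemH A ρ a ∧ MemH A ρ b ∧ a ≠ 0 ∧ b ≠ 0 ∧ w = a + b

/-- `w` is a Graver basis vector of `A`: a member of the Hilbert basis of `H_ρ` for some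
sign pattern `ρ`. -/
def IsGraverVector (A : Matrix α β ℤ) (w : β → ℤ) : Prop :=
  ∃ ρ : β → ℤ, IsSignPattern ρ ∧ IsHilbertBasisElem A ρ w

/-- The Graver basis `Gr_A` of the toric ideal `I_A`, as a set of binomials. -/
def graverBasis (A : Matrix α β ℤ) : Set (MvPolynomial β ℂ) :=
  { p | ∃ w : β → ℤ, IsGraverVector A w ∧ p = binom w }

/-- The degree of the binomial `x^{w⁺} - x^{w⁻}`, namely `max(Σ w⁺, Σ w⁻)`. -/
def degZ (w : β → ℤ) : ℕ := max (∑ i, (w i).toNat) (∑ i, (-(w i)).toNat)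

/-- The columns of `A` generate a pointed cone. -/
def PointedCone' (A : Matrix α β ℤ) : Prop :=
  ∀ c : β → ℚ, (∀ i, 0 ≤ c i) → (A.map (Int.cast : ℤ → ℚ)).mulVec c = 0 → c = 0

/-- The row span of `A` contains the all-ones vector. -/
def RowSpanOne (A : Matrix α β ℤ) : Prop :=
  ∃ w : α → ℚ, (A.map (Int.cast : ℤ → ℚ)).vecMul w = fun _ => 1

/-- The universal Gröbner basis of an ideal: the union of its reduced Gröbner bases over
all term orders. -/
def universalGroebnerBasis {γ : Type u} [Fintype γ] (I : Ideal (MvPolynomial γ ℂ)) :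
    Set (MvPolynomial γ ℂ) :=
  { p | ∃ (m : MonomialOrder.{u, u} γ) (G : Set (MvPolynomial γ ℂ)),
      IsReducedGroebnerBasis m I G ∧ p ∈ G }

/-- The initial ideal of `I` with respect to a monomial order: the monomial ideal generated by
the leading monomials of the nonzero elements of `I`. -/
def initialIdeal (m : MonomialOrder β) (I : Ideal (MvPolynomial β ℂ)) :
    Ideal (MvPolynomial β ℂ) :=
  Ideal.span { p | ∃ f ∈ I, f ≠ 0 ∧ p = monomial (leadMon m f) (1 : ℂ) }

/-!
Over `ℚ`, every kernel vector `w` of `A` is a positive combination of circuits sign-compatible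
with `w`: subtract from `w` the largest multiple of such a circuit that keeps the signs of `w`,
which kills a coordinate, and recurse. The circuit removed at each step is nonzero on the
coordinate it kills while all later ones vanish there, so the circuits are linearly independent
and there are at most `dim ker A = n - d` of them.

Binomials of a reduced Gröbner basis are primitive: if a nonzero `u ∈ ker A` is conformal to `v`
(`u⁺ ≤ v⁺` and `u⁻ ≤ v⁻`), then the leading monomials of the binomials of `u` and of `v - u` divide
monomials of `x^{v⁺} - x^{v⁻}`, so reducedness makes both divisible by its leading monomial, which
forces `u = v`. A coefficient `λ > 1` in the decomposition of `v` would make its circuit conformal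
to `v`, hence equal to `v`, and then `v = λ v + (sign-compatible terms)` gives `v = 0`.
-/

open Matrix

section Binomials

@[simp] lemma posPart_apply (w : β → ℤ) (k : β) : _root_.posPart w k = (w k).toNat := rfl

@[simp] lemma negPart_apply (w : β → ℤ) (k : β) : _root_.negPart w k = (-w k).toNat := rfl

lemma posPart_ne_negPart {w : β → ℤ} (hw : w ≠ 0) : _root_.posPart w ≠ _root_.negPart w := by
  contrapose! hw
  ext k
  have := DFunLike.congr_fun hw k
  simp only [posPart_apply, negPart_apply] at this
  simp only [Pi.zero_apply]
  omega

lemma binom_zero : binom (0 : β → ℤ) = 0 := sub_eq_zero.mpr rfl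

lemma support_binom {w : β → ℤ} (hw : w ≠ 0) :
    (binom w).support = {_root_.posPart w, _root_.negPart w} := by
  rw [binom, sub_eq_add_neg, ← map_neg]
  convert Finsupp.support_single_add_single (posPart_ne_negPart hw) one_ne_zero
    (neg_ne_zero.mpr (one_ne_zero (α := ℂ)))
  rfl

lemma binom_ne_zero {w : β → ℤ} (hw : w ≠ 0) : binom w ≠ 0 := by
  rw [← MvPolynomial.support_nonempty, support_binom hw]
  exact Finset.insert_nonempty _ _

lemma leadMon_eq_degree {σ : Type*} (m : MonomialOrder σ) (f : MvPolynomial σ ℂ) :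
    leadMon m f = m.degree f :=
  rfl

lemma leadMon_binom_eq_or {m : MonomialOrder β} {w : β → ℤ} (hw : w ≠ 0) :
    leadMon m (binom w) = _root_.posPart w ∨ leadMon m (binom w) = _root_.negPart w := by
  simpa [leadMon_eq_degree, support_binom hw] using m.degree_mem_support (binom_ne_zero hw)

lemma leadMon_binom_ne_zero {m : MonomialOrder β} {w : β → ℤ} (hw : w ≠ 0) :
    leadMon m (binom w) ≠ 0 := by
  rw [leadMon_eq_degree]
  intro h
  have hle : ∀ c ∈ (binom w).support, c = 0 := fun c hc =>
    (m.toSyn_eq_zero_iff c).mp (m.eq_zero_iff.mpr (by simpa [h] using m.le_degree hc))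
  rw [support_binom hw] at hle
  exact posPart_ne_negPart hw ((hle _ (by simp)).trans (hle _ (by simp)).symm)

lemma laurentMonomial_zero : laurentMonomial (0 : α → ℤ) = 1 := by
  rw [laurentMonomial, AddMonoidAlgebra.one_def]
  congr 1
  ext; simp

lemma laurentMonomial_add (a b : α → ℤ) :
    laurentMonomial (a + b) = laurentMonomial a * laurentMonomial b := by
  rw [laurentMonomial, laurentMonomial, laurentMonomial, AddMonoidAlgebra.single_mul_single,
    one_mul]
  congr 1
  ext; simp

lemma laurentMonomial_nsmul (e : ℕ) (a : α → ℤ) :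
    laurentMonomial (e • a) = laurentMonomial a ^ e := by
  induction e with
  | zero => simp [laurentMonomial_zero]
  | succ e ih => rw [succ_nsmul, laurentMonomial_add, ih, pow_succ]

lemma phiMap_monomial (A : Matrix α β ℤ) (c : β →₀ ℕ) :
    phiMap A (monomial c 1) = laurentMonomial (A *ᵥ fun j => (c j : ℤ)) := by
  classical
  induction c using Finsupp.induction with
  | zero =>
    rw [monomial_zero', show (fun j => ((0 : β →₀ ℕ) j : ℤ)) = 0 from rfl, mulVec_zero,
      laurentMonomial_zero]
    exact map_one (phiMap A)
  | single_add j e c _ _ ih =>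
    rw [monomial_single_add, map_mul, ih, map_pow, phiMap, aeval_X, ← laurentMonomial_nsmul,
      ← laurentMonomial_add]
    congr 1
    ext i
    simp [Matrix.mulVec, dotProduct, Finsupp.single_apply, Finset.sum_add_distrib, mul_add,
      mul_comm]

lemma binom_mem_toricIdeal {A : Matrix α β ℤ} {w : β → ℤ} (hw : A *ᵥ w = 0) :
    binom w ∈ toricIdeal A := by
  have hparts :
      (fun j => (_root_.posPart w j : ℤ)) - (fun j => (_root_.negPart w j : ℤ)) = w := by
    ext j; simp
  have hA : A *ᵥ (fun j => (_root_.posPart w j : ℤ)) =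
      A *ᵥ (fun j => (_root_.negPart w j : ℤ)) := by
    rw [← sub_eq_zero, ← mulVec_sub, hparts, hw]
  rw [toricIdeal, RingHom.mem_ker, binom, AlgHom.toRingHom_eq_coe, RingHom.coe_coe, map_sub,
    phiMap_monomial, phiMap_monomial, hA, sub_self]

end Binomials

lemma IsReducedGroebnerBasis.leadMon_le_leadMon {σ : Type*} {m : MonomialOrder σ}
    {I : Ideal (MvPolynomial σ ℂ)} {G : Set (MvPolynomial σ ℂ)}
    (hG : IsReducedGroebnerBasis m I G) {g f : MvPolynomial σ ℂ} (hg : g ∈ G) (hf : f ∈ I)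
    (hf0 : f ≠ 0) {c : σ →₀ ℕ} (hc : c ∈ g.support) (hfc : leadMon m f ≤ c) :
    leadMon m g ≤ leadMon m f := by
  obtain ⟨g', hg', hg'f⟩ := hG.1.2.2 f hf hf0
  obtain rfl | hne := eq_or_ne g' g
  · exact hg'f
  · exact absurd (hg'f.trans hfc) (hG.2.2 g hg g' hg' hne c hc)

section Conformal

def IsConformal {ι : Type*} (u v : ι → ℤ) : Prop :=
  ∀ k, 0 ≤ u k ∧ u k ≤ v k ∨ v k ≤ u k ∧ u k ≤ 0

lemma IsConformal.sub_left {ι : Type*} {u v : ι → ℤ} (h : IsConformal u v) :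
    IsConformal (v - u) v := fun k => by
  have := h k; simp only [Pi.sub_apply]; omega

lemma isConformal_of_mul_le {ι : Type*} {u v : ι → ℤ} (h0 : ∀ k, u k ≠ 0 → 0 < u k * v k)
    (h1 : ∀ k, u k * v k ≤ v k * v k) : IsConformal u v := by
  intro k
  obtain hu | hu := eq_or_ne (u k) 0
  · simpa [hu] using le_total 0 (v k)
  have h0 := h0 k hu
  have h1 := h1 k
  rcases lt_or_gt_of_ne (right_ne_zero_of_mul h0.ne') with hv | hv
  · exact .inr ⟨by nlinarith, by nlinarith⟩
  · exact .inl ⟨by nlinarith, by nlinarith⟩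

namespace IsConformal

variable {u v : β → ℤ}

lemma posPart_le (h : IsConformal u v) : _root_.posPart u ≤ _root_.posPart v :=
  Finsupp.le_def.mpr fun k => by have := h k; simp only [posPart_apply]; omega

lemma negPart_le (h : IsConformal u v) : _root_.negPart u ≤ _root_.negPart v :=
  Finsupp.le_def.mpr fun k => by have := h k; simp only [negPart_apply]; omega

/-- `u` and `v - u` split every coordinate of `v`, so no nonzero part of `v` lies below a part of
both of them. -/
lemma eq_zero_of_le_parts (h : IsConformal u v) {a : β →₀ ℕ}
    (ha : a = _root_.posPart v ∨ a = _root_.negPart v)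
    (hu : a ≤ _root_.posPart u ∨ a ≤ _root_.negPart u)
    (hvu : a ≤ _root_.posPart (v - u) ∨ a ≤ _root_.negPart (v - u)) : a = 0 := by
  ext k
  have hk := h k
  rcases ha with rfl | rfl <;> rcases hu with hu | hu <;> rcases hvu with hvu | hvu <;>
    · have h1 := Finsupp.le_def.mp hu k
      have h2 := Finsupp.le_def.mp hvu k
      simp only [posPart_apply, negPart_apply, Pi.sub_apply] at h1 h2 ⊢
      simp only [Finsupp.coe_zero, Pi.zero_apply]
      omega

theorem eq_of_binom_mem_reducedGroebnerBasis {A : Matrix α β ℤ} {m : MonomialOrder β}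
    {G : Set (MvPolynomial β ℂ)} (hG : IsReducedGroebnerBasis m (toricIdeal A) G)
    (hvG : binom v ∈ G) (hv : A *ᵥ v = 0) (hu0 : u ≠ 0) (hu : A *ᵥ u = 0)
    (huv : IsConformal u v) : u = v := by
  have hv0 : v ≠ 0 := by
    rintro rfl
    exact hu0 (funext fun k => by have := huv k; simp only [Pi.zero_apply] at this ⊢; omega)
  have hmem : ∀ c, c = _root_.posPart v ∨ c = _root_.negPart v → c ∈ (binom v).support := by
    intro c hc
    simpa [support_binom hv0] using hc
  have key : ∀ w, w ≠ 0 → A *ᵥ w = 0 → IsConformal w v →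
      leadMon m (binom v) ≤ _root_.posPart w ∨ leadMon m (binom v) ≤ _root_.negPart w := by
    intro w hw0 hw hwv
    have hle := fun c hc => hG.leadMon_le_leadMon hvG (binom_mem_toricIdeal hw)
      (binom_ne_zero hw0) (hmem c hc)
    rcases leadMon_binom_eq_or (m := m) hw0 with h | h <;> rw [h] at hle
    · exact .inl (hle _ (.inl rfl) hwv.posPart_le)
    · exact .inr (hle _ (.inr rfl) hwv.negPart_le)
  by_contra hne
  have hvu0 : v - u ≠ 0 := sub_ne_zero.mpr (Ne.symm hne)
  have hvu : A *ᵥ (v - u) = 0 := by rw [mulVec_sub, hv, hu, sub_zero]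
  exact leadMon_binom_ne_zero hv0 (huv.eq_zero_of_le_parts (leadMon_binom_eq_or hv0)
    (key u hu0 hu huv) (key (v - u) hvu0 hvu huv.sub_left))

end IsConformal

end Conformal

section SignCompatible

open Function

variable {K ι : Type*} [Field K] [LinearOrder K]

def SignCompatible (u x : ι → K) : Prop := ∀ k, u k ≠ 0 → 0 < u k * x k

namespace SignCompatible

variable {u x y : ι → K}

lemma support_subset (h : SignCompatible u x) : support u ⊆ support x :=
  fun k hk => right_ne_zero_of_mul (h k hk).ne'

lemma support_ssubset (h : SignCompatible u x) {j : ι} (hj : x j ≠ 0) (huj : u j = 0) :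
    support u ⊂ support x :=
  ssubset_of_subset_of_ne h.support_subset fun he => (he ▸ hj : j ∈ support u) huj

lemma mul_nonneg (h : SignCompatible u x) (k : ι) : 0 ≤ u k * x k := by
  by_cases hk : u k = 0
  · simp [hk]
  · exact (h k hk).le

variable [IsStrictOrderedRing K]

lemma refl (x : ι → K) : SignCompatible x x := fun _ hk => mul_self_pos.mpr hk

lemma trans (huy : SignCompatible u y) (hyx : SignCompatible y x) : SignCompatible u x := by
  intro k hk
  have h1 := huy k hk
  have h2 := hyx k (huy.support_subset hk)
  nlinarith [mul_pos h1 h2, mul_self_nonneg (y k)]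

lemma smul {c : K} (hc : 0 < c) (h : SignCompatible u x) : SignCompatible (c • u) x := by
  intro k hk
  simpa [mul_assoc] using mul_pos hc (h k (right_ne_zero_of_mul hk))

lemma mul_nonneg_of_mul_nonneg (h : SignCompatible u x) {ρ : ι → K} (hρ : ∀ k, 0 ≤ ρ k * x k)
    (k : ι) : 0 ≤ ρ k * u k := by
  by_cases hk : u k = 0
  · simp [hk]
  · have := h k hk
    nlinarith [hρ k, mul_self_nonneg (u k)]

lemma coeff_mul_le_of_eq_sum {ι' : Type*} [Fintype ι'] {w : ι' → ι → K} {c : ι' → K}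
    (hw : ∀ i, SignCompatible (w i) x) (hc : ∀ i, 0 ≤ c i) (hx : x = ∑ i, c i • w i)
    (i : ι') (k : ι) : c i * (w i k * x k) ≤ x k * x k := by
  have hxk : x k = ∑ i, c i * w i k := by
    rw [hx]
    simp only [Finset.sum_apply, Pi.smul_apply, smul_eq_mul]
  nth_rewrite 2 [hxk]
  rw [Finset.sum_mul]
  simp only [mul_assoc]
  exact Finset.single_le_sum (fun i _ => _root_.mul_nonneg (hc i) ((hw i).mul_nonneg k))
    (Finset.mem_univ i)

end SignCompatible

/-- The step `t` is the largest one for which `x - t • z` keeps the signs of `x`. -/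
lemma exists_sub_smul_signCompatible [IsStrictOrderedRing K] [Fintype ι] {x z : ι → K}
    (hzx : support z ⊆ support x) (hpos : ∃ j, 0 < z j * x j) :
    ∃ t : K, 0 < t ∧ ∃ j, z j ≠ 0 ∧ (x - t • z) j = 0 ∧ SignCompatible (x - t • z) x := by
  classical
  set S := Finset.univ.filter fun j => 0 < z j * x j
  obtain ⟨j, hjS, hjmin⟩ := Finset.exists_min_image S (fun j => x j / z j)
    (let ⟨j, hj⟩ := hpos; ⟨j, by simpa [S] using hj⟩)
  have hj : 0 < z j * x j := by simpa [S] using hjS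
  have hzj : z j ≠ 0 := left_ne_zero_of_mul hj.ne'
  set t := x j / z j
  have ht : 0 < t :=
    div_pos_iff.mpr ((pos_and_pos_or_neg_and_neg_of_mul_pos hj).imp And.symm And.symm)
  refine ⟨t, ht, j, hzj, by simp [t, div_mul_cancel₀ _ hzj], fun k hk => ?_⟩
  simp only [Pi.sub_apply, Pi.smul_apply, smul_eq_mul] at hk ⊢
  have hxk : x k ≠ 0 := fun h0 => hk (by
    rw [h0, notMem_support.mp fun hz => hzx hz h0, mul_zero, sub_zero])
  rcases lt_or_ge 0 (z k * x k) with hzk | hzk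
  · have htk : t * (z k * x k) ≤ x k * x k :=
      calc t * (z k * x k) ≤ x k / z k * (z k * x k) :=
            mul_le_mul_of_nonneg_right (hjmin k (by simpa [S] using hzk)) hzk.le
        _ = x k * x k := by field_simp [left_ne_zero_of_mul hzk.ne']
    exact lt_of_le_of_ne (by nlinarith) (mul_ne_zero hk hxk).symm
  · nlinarith [mul_self_pos.mpr hxk]

end SignCompatible

section Elementary

open Function

variable {K ι κ : Type*} [Field K] [LinearOrder K] [IsStrictOrderedRing K] [Fintype ι]

def IsElementary (B : Matrix κ ι K) (y : ι → K) : Prop :=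
  y ≠ 0 ∧ B *ᵥ y = 0 ∧
    ∀ z, z ≠ 0 → B *ᵥ z = 0 → support z ⊆ support y → support z = support y

lemma exists_sub_smul_ne_zero_of_support_ssubset {B : Matrix κ ι K} {x z : ι → K}
    (hx : B *ᵥ x = 0) (hz : B *ᵥ z = 0) (hzx : support z ⊂ support x)
    (hpos : ∃ j, 0 < z j * x j) :
    ∃ t : K, B *ᵥ (x - t • z) = 0 ∧ x - t • z ≠ 0 ∧
      SignCompatible (x - t • z) x ∧ support (x - t • z) ⊂ support x := by
  obtain ⟨t, -, k, hzk, hk, hsc⟩ := exists_sub_smul_signCompatible hzx.subset hpos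
  obtain ⟨l, hlx, hlz⟩ := Set.exists_of_ssubset hzx
  refine ⟨t, by rw [mulVec_sub, mulVec_smul, hx, hz, smul_zero, sub_zero], ?_, hsc,
    hsc.support_ssubset (hzx.subset hzk) hk⟩
  intro h0
  have := congrFun h0 l
  simp only [Pi.sub_apply, Pi.smul_apply, smul_eq_mul, notMem_support.mp hlz, mul_zero,
    sub_zero, Pi.zero_apply] at this
  exact hlx this

theorem exists_isElementary_signCompatible (B : Matrix κ ι K) {x : ι → K} (hx : B *ᵥ x = 0)
    (hx0 : x ≠ 0) : ∃ y, IsElementary B y ∧ SignCompatible y x := by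
  induction h : (support x).ncard using Nat.strong_induction_on generalizing x with
  | _ N ih =>
  by_cases hel : IsElementary B x
  · exact ⟨x, hel, .refl x⟩
  obtain ⟨z, hz0, hz, hzx⟩ : ∃ z, z ≠ 0 ∧ B *ᵥ z = 0 ∧ support z ⊂ support x := by
    simp only [IsElementary, hx0, hx, ne_eq, not_false_eq_true, true_and, not_forall] at hel
    obtain ⟨z, hz0, hz, hzx, hne⟩ := hel
    exact ⟨z, hz0, hz, ssubset_of_subset_of_ne hzx hne⟩
  -- replacing `z` by `-z` if necessary, `z` agrees in sign with `x` somewhere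
  obtain ⟨j, hj⟩ := Function.ne_iff.mp hz0
  obtain ⟨z, hz, hzx, hpos⟩ : ∃ z', B *ᵥ z' = 0 ∧ support z' ⊂ support x ∧ 0 < z' j * x j := by
    rcases lt_or_gt_of_ne (mul_ne_zero hj (hzx.subset hj)) with hneg | hpos
    · exact ⟨-z, by rw [mulVec_neg, hz, neg_zero], by rwa [Function.support_neg],
        by simpa [neg_mul] using hneg⟩
    · exact ⟨z, hz, hzx, hpos⟩
  obtain ⟨t, hx', hx'0, hsc, hss⟩ :=
    exists_sub_smul_ne_zero_of_support_ssubset hx hz hzx ⟨j, hpos⟩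
  obtain ⟨y, hy, hyx'⟩ := ih _ (h ▸ Set.ncard_lt_ncard hss) hx' hx'0 rfl
  exact ⟨y, hy, hyx'.trans hsc⟩

end Elementary

section Circuits

open Function

lemma exists_intCast_eq_smul {ι : Type*} [Fintype ι] (y : ι → ℚ) :
    ∃ (w : ι → ℤ) (c : ℚ), 0 < c ∧ (fun k => (w k : ℚ)) = c • y := by
  classical
  refine ⟨fun k => (y k).num * ∏ l ∈ Finset.univ.erase k, ((y l).den : ℤ),
    ∏ l, ((y l).den : ℚ), by positivity, funext fun k => ?_⟩
  rw [Pi.smul_apply, smul_eq_mul, ← Finset.mul_prod_erase _ _ (Finset.mem_univ k)]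
  push_cast
  rw [← Rat.mul_den_eq_num]
  ring

lemma exists_primitive_intCast_eq_smul {ι : Type*} [Fintype ι] {y : ι → ℚ} (hy : y ≠ 0) :
    ∃ (u : ι → ℤ) (μ : ℚ), 0 < μ ∧ Finset.univ.gcd u = 1 ∧ (fun k => (u k : ℚ)) = μ • y := by
  obtain ⟨w, c, hc, hw⟩ := exists_intCast_eq_smul y
  obtain ⟨k, hk⟩ := Function.ne_iff.mp hy
  have hwk : w k ≠ 0 := by
    have := congrFun hw k
    simp only [Pi.smul_apply, smul_eq_mul] at this
    exact_mod_cast this ▸ mul_ne_zero hc.ne' hk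
  set g := Finset.univ.gcd w
  have hg : 0 < g := by
    refine lt_of_le_of_ne (Int.nonneg_of_normalize_eq_self Finset.normalize_gcd) (Ne.symm ?_)
    exact fun h => hwk (Finset.gcd_eq_zero_iff.mp h k (Finset.mem_univ k))
  refine ⟨fun l => w l / g, c / g, div_pos hc (by exact_mod_cast hg),
    Finset.gcd_div_eq_one (Finset.mem_univ k) hwk, funext fun l => ?_⟩
  have hgl : g ∣ w l := Finset.gcd_dvd (Finset.mem_univ l)
  rw [Int.cast_div_charZero hgl, congrFun hw l]
  simp only [Pi.smul_apply, smul_eq_mul]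
  ring

lemma support_intCast {ι : Type*} (w : ι → ℤ) : support (fun k => (w k : ℚ)) = support w := by
  ext; simp

lemma map_intCast_mulVec_eq_zero_iff {κ : Type*} (A : Matrix κ β ℤ) (w : β → ℤ) :
    A.map (Int.cast : ℤ → ℚ) *ᵥ (fun k => (w k : ℚ)) = 0 ↔ A *ᵥ w = 0 := by
  simp only [funext_iff, Pi.zero_apply]
  refine forall_congr' fun i => ?_
  have := RingHom.map_mulVec (Int.castRingHom ℚ) A w i
  simp only [Int.coe_castRingHom] at this
  rw [show (fun k => (w k : ℚ)) = Int.cast ∘ w from rfl, ← this, Int.cast_eq_zero]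

lemma IsElementary.exists_isCircuit {κ : Type*} {A : Matrix κ β ℤ} {y : β → ℚ}
    (hy : IsElementary (A.map (Int.cast : ℤ → ℚ)) y) :
    ∃ u : β → ℤ, IsCircuit A u ∧ ∃ μ : ℚ, 0 < μ ∧ (fun k => (u k : ℚ)) = μ • y := by
  obtain ⟨hy0, hyA, hymin⟩ := hy
  obtain ⟨u, μ, hμ, hgcd, hu⟩ := exists_primitive_intCast_eq_smul hy0
  have hsupp : support u = support y := by
    rw [← support_intCast, hu, support_const_smul_of_ne_zero _ _ hμ.ne']
  have hu0 : u ≠ 0 := fun h => hy0 (support_eq_empty_iff.mp (hsupp ▸ h ▸ support_zero))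
  have huA : A *ᵥ u = 0 := by
    rw [← map_intCast_mulVec_eq_zero_iff, hu, mulVec_smul, hyA, smul_zero]
  refine ⟨u, ⟨hu0, huA, hgcd, fun v hv0 hvA hvu => ?_⟩, μ, hμ, hu⟩
  have hcast := hymin (fun k => (v k : ℚ)) (fun h => hv0 (funext fun k => by
    simpa using congrFun h k)) ((map_intCast_mulVec_eq_zero_iff A v).mpr hvA)
  rw [support_intCast, ← hsupp] at hcast
  exact hcast hvu

lemma LinearIndependent.finCons_of_apply_eq_zero {R ι : Type*} [Ring R] [NoZeroDivisors R]
    {k : ℕ} {v : Fin k → ι → R} (hv : LinearIndependent R v) {x : ι → R} {j : ι} (hx : x j ≠ 0)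
    (hvj : ∀ i, v i j = 0) : LinearIndependent R (Fin.cons x v : Fin (k + 1) → ι → R) := by
  refine hv.finCons' x v fun c y hy hcy => ?_
  have hyj : y j = 0 := by
    refine (Submodule.span_le (p := LinearMap.ker (LinearMap.proj j)) |>.mpr ?_) hy
    rintro _ ⟨i, rfl⟩
    exact hvj i
  have := congrFun hcy j
  simp only [Pi.add_apply, Pi.smul_apply, smul_eq_mul, hyj, add_zero, Pi.zero_apply] at this
  exact (mul_eq_zero.mp this).resolve_right hx

theorem exists_circuit_decomposition {κ : Type*} (A : Matrix κ β ℤ) {x : β → ℚ}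
    (hx : A.map (Int.cast : ℤ → ℚ) *ᵥ x = 0) :
    ∃ (k : ℕ) (u : Fin k → β → ℤ) (c : Fin k → ℚ), LinearIndependent ℤ u ∧
      (∀ i, IsCircuit A (u i) ∧ SignCompatible (fun j => (u i j : ℚ)) x) ∧ (∀ i, 0 < c i) ∧
      x = ∑ i, c i • fun j => (u i j : ℚ) := by
  induction h : (support x).ncard using Nat.strong_induction_on generalizing x with
  | _ N ih =>
  obtain rfl | hx0 := eq_or_ne x 0
  · exact ⟨0, Fin.elim0, Fin.elim0, linearIndependent_empty_type, fun i => i.elim0,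
      fun i => i.elim0, by simp⟩
  obtain ⟨y, hy, hyx⟩ := exists_isElementary_signCompatible _ hx hx0
  obtain ⟨u₀, hu₀, μ, hμ, hu₀y⟩ := hy.exists_isCircuit
  have hu₀x : SignCompatible (fun j => (u₀ j : ℚ)) x := hu₀y ▸ hyx.smul hμ
  obtain ⟨j, hj⟩ : ∃ j, u₀ j ≠ 0 := Function.ne_iff.mp hu₀.1
  obtain ⟨t, ht, l, hl, hx'l, hsc⟩ := exists_sub_smul_signCompatible hu₀x.support_subset
    ⟨j, hu₀x j (Int.cast_ne_zero.mpr hj)⟩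
  have hx' : A.map (Int.cast : ℤ → ℚ) *ᵥ (x - t • fun j => (u₀ j : ℚ)) = 0 := by
    rw [mulVec_sub, mulVec_smul, hx, (map_intCast_mulVec_eq_zero_iff A u₀).mpr hu₀.2.1,
      smul_zero, sub_zero]
  obtain ⟨k, u, c, hli, hu, hc, hsum⟩ :=
    ih _ (h ▸ Set.ncard_lt_ncard (hsc.support_ssubset (hu₀x.support_subset hl) hx'l)) hx' rfl
  refine ⟨k + 1, Fin.cons u₀ u, Fin.cons t c, ?_, Fin.forall_fin_succ.mpr ⟨⟨hu₀, hu₀x⟩,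
    fun i => ⟨(hu i).1, (hu i).2.trans hsc⟩⟩, Fin.forall_fin_succ.mpr ⟨ht, hc⟩, ?_⟩
  · refine hli.finCons_of_apply_eq_zero (by exact_mod_cast hl) fun i => ?_
    by_contra hil
    simpa [hx'l] using (hu i).2 l (Int.cast_ne_zero.mpr hil)
  · simp only [Fin.sum_univ_succ, Fin.cons_zero, Fin.cons_succ, ← hsum]
    abel

end Circuits

theorem coeff_le_one_of_binom_mem_reducedGroebnerBasis {A : Matrix α β ℤ} {m : MonomialOrder β}
    {G : Set (MvPolynomial β ℂ)} (hG : IsReducedGroebnerBasis m (toricIdeal A) G) {v : β → ℤ}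
    (hvG : binom v ∈ G) (hv : A *ᵥ v = 0) {k : ℕ} {u : Fin k → β → ℤ} {c : Fin k → ℚ}
    (hu : ∀ i, IsCircuit A (u i) ∧ SignCompatible (fun j => (u i j : ℚ)) fun j => (v j : ℚ))
    (hc : ∀ i, 0 ≤ c i) (hsum : (fun j => (v j : ℚ)) = ∑ i, c i • fun j => (u i j : ℚ))
    (i : Fin k) : c i ≤ 1 := by
  by_contra! hc1
  have hle := SignCompatible.coeff_mul_le_of_eq_sum (fun i => (hu i).2) hc hsum i
  have huv : IsConformal (u i) v := isConformal_of_mul_le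
    (fun j hj => by
      have h0 := (hu i).2 j
      beta_reduce at h0
      exact_mod_cast h0 (by exact_mod_cast hj)) fun j => by
      have h0 := (hu i).2.mul_nonneg j
      have h1 := hle j
      exact_mod_cast (by nlinarith : (u i j * v j : ℚ) ≤ v j * v j)
  have hui := huv.eq_of_binom_mem_reducedGroebnerBasis hG hvG hv (hu i).1.1 (hu i).1.2.1
  refine (hu i).1.1 (funext fun j => ?_)
  have h1 := hle j
  simp only [hui] at h1 ⊢
  have hsq : (v j : ℚ) * v j ≤ 0 := by nlinarith
  exact_mod_cast mul_self_eq_zero.mp (le_antisymm hsq (mul_self_nonneg _))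

theorem Matrix.card_add_rank_le_of_mulVec_eq_zero {R m n : Type u} {ι : Type*} [CommRing R]
    [IsDomain R] [Fintype m] [Fintype n] [Fintype ι] (A : Matrix m n R) {w : ι → n → R}
    (hw : LinearIndependent R w) (hA : ∀ i, A *ᵥ w i = 0) :
    Fintype.card ι + A.rank ≤ Fintype.card n := by
  let f := A.mulVecLin
  let w' : ι → LinearMap.ker f := fun i => ⟨w i, hA i⟩
  have hker : (Fintype.card ι : Cardinal) ≤ Module.rank R (LinearMap.ker f) := by
    simpa using (hw.of_comp (LinearMap.ker f).subtype (v := w')).cardinal_lift_le_rank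
  have hnull := LinearMap.rank_range_add_rank_ker f
  rw [rank_fun', ← Module.finrank_eq_rank] at hnull
  have : (Fintype.card ι : Cardinal) + (A.rank : Cardinal) ≤ Fintype.card n := by
    rw [← hnull, add_comm]
    exact add_le_add le_rfl hker
  exact_mod_cast this

lemma exists_combination_fin_of_le {X R : Type*} [Semiring R] {k N : ℕ} (hkN : k ≤ N)
    (hk : 0 < k) (u : Fin k → X) (c : Fin k → R) :
    ∃ (u' : Fin N → X) (c' : Fin N → R), (∀ i, ∃ i', u' i = u i' ∧ (c' i = c i' ∨ c' i = 0)) ∧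
      ∀ f : X → R, ∑ i, c' i * f (u' i) = ∑ i, c i * f (u i) := by
  refine ⟨fun i => if h : (i : ℕ) < k then u ⟨i, h⟩ else u ⟨0, hk⟩,
    fun i => if h : (i : ℕ) < k then c ⟨i, h⟩ else 0, fun i => ?_, fun f => ?_⟩
  · by_cases h : (i : ℕ) < k
    · exact ⟨⟨i, h⟩, by simp [h], .inl (by simp [h])⟩
    · exact ⟨⟨0, hk⟩, by simp [h], .inr (by simp [h])⟩
  · refine (Fintype.sum_of_injective (Fin.castLE hkN) (Fin.castLE_injective hkN) _ _
      (fun i hi => ?_) (fun i => by simp)).symm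
    have : ¬(i : ℕ) < k := fun h => hi ⟨⟨i, h⟩, rfl⟩
    simp [this]

theorem reducedGB_element_combination_of_circuits_general (d n : ℕ) (A : Matrix (Fin d) (Fin n) ℤ)
    (hrank : A.rank = d)
    (m : MonomialOrder (Fin n)) (G : Set (MvPolynomial (Fin n) ℂ))
    (hG : IsReducedGroebnerBasis m (toricIdeal A) G)
    (v : Fin n → ℤ) (hker : A.mulVec v = 0) (hvG : binom v ∈ G)
    (ρ : Fin n → ℤ) (hvρ : ∀ i, 0 ≤ ρ i * v i) :
    ∃ (u : Fin (n - d) → Fin n → ℤ) (lam : Fin (n - d) → ℝ),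
      (∀ i, IsCircuit A (u i) ∧ ∀ k, 0 ≤ ρ k * u i k) ∧
      (∀ i, 0 ≤ lam i ∧ lam i ≤ 1) ∧
      ∀ j, (v j : ℝ) = ∑ i, lam i * (u i j : ℝ) := by
  have hv0 : v ≠ 0 := by
    rintro rfl
    exact (hG.1.2.1 _ hvG).2 binom_zero
  obtain ⟨k, u, c, hli, hu, hc, hsum⟩ :=
    exists_circuit_decomposition A ((map_intCast_mulVec_eq_zero_iff A v).mpr hker)
  have hkN : k ≤ n - d := by
    have := A.card_add_rank_le_of_mulVec_eq_zero hli fun i => (hu i).1.2.1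
    simp only [Fintype.card_fin, hrank] at this
    omega
  have hk : 0 < k := Nat.pos_of_ne_zero fun hk0 => hv0 (by
    subst hk0
    simpa [funext_iff] using hsum)
  have hc1 := coeff_le_one_of_binom_mem_reducedGroebnerBasis hG hvG hker hu (fun i => (hc i).le)
    hsum
  obtain ⟨u', c', hu', hsum'⟩ := exists_combination_fin_of_le hkN hk u fun i => (c i : ℝ)
  refine ⟨u', c', fun i => ?_, fun i => ?_, fun j => ?_⟩
  · obtain ⟨i', hi', -⟩ := hu' i
    rw [hi']
    refine ⟨(hu i').1, fun l => ?_⟩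
    exact_mod_cast (hu i').2.mul_nonneg_of_mul_nonneg (ρ := fun l => (ρ l : ℚ))
      (fun l => by exact_mod_cast hvρ l) l
  · obtain ⟨i', -, h | h⟩ := hu' i <;> rw [h]
    · exact ⟨by exact_mod_cast (hc i').le, by exact_mod_cast hc1 i'⟩
    · exact ⟨le_rfl, zero_le_one⟩
  · rw [hsum' fun w => (w j : ℝ)]
    have := congrArg (Rat.cast : ℚ → ℝ) (congrFun hsum j)
    simpa [Finset.sum_apply] using this

/-- If `x^{v⁺} - x^{v⁻}` is an element of a reduced Gröbner basis of `I_A` and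
`v ∈ H_ρ` for a sign pattern `ρ`, then `v` is a convex-coefficient conical combination
`v = λ_1 u_1 + ⋯ + λ_{n-d} u_{n-d}` of `n - d` circuits of `A` lying in `H_ρ`, with
`0 ≤ λ_i ≤ 1` for all `i`. -/
theorem reducedGB_element_combination_of_circuits (d n : ℕ) (A : Matrix (Fin d) (Fin n) ℤ)
    (hrank : A.rank = d) (hrow : RowSpanOne A)
    (m : MonomialOrder (Fin n)) (G : Set (MvPolynomial (Fin n) ℂ))
    (hG : IsReducedGroebnerBasis m (toricIdeal A) G)
    (v : Fin n → ℤ) (hker : A.mulVec v = 0) (hvG : binom v ∈ G)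
    (ρ : Fin n → ℤ) (hρ : IsSignPattern ρ) (hvρ : ∀ i, 0 ≤ ρ i * v i) :
    ∃ (u : Fin (n - d) → Fin n → ℤ) (lam : Fin (n - d) → ℝ),
      (∀ i, IsCircuit A (u i) ∧ ∀ k, 0 ≤ ρ k * u i k) ∧
      (∀ i, 0 ≤ lam i ∧ lam i ≤ 1) ∧
      ∀ j, (v j : ℝ) = ∑ i, lam i * (u i j : ℝ) :=
  reducedGB_element_combination_of_circuits_general d n A hrank m G hG v hker hvG ρ hvρ
end
end

section
/- Fix a cost vector $\omega$ and a tie-breaking term order, and let $\mathcal{G}_{A,\succ}$ be the corresponding reduced Gröbner basis of $I_A$. For each right-hand side $b \in \mathbb{N}(A)$, the directed graph $G_{A,\omega,b}$, whose vertices are the feasible solutions of $IP_{A,\omega}(b)$ and which has a directed edge from $v$ to $u$ whenever $x^{(v-u)_+} - x^{(v-u)_-} \in \mathcal{G}_{A,\succ}$, is a connected acyclic directed graph with a unique sink, and this sink is the optimal solution of $IP_{A,\omega}(b)$. -/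
open MvPolynomial

noncomputable section

universe u

variable {α β : Type*} [Fintype α] [Fintype β]

/-- `x` is a feasible solution of `IP_{A,ω}(b)`: a nonnegative integer vector with `Ax = b`. -/
def Feasible {α β : Type*} [Fintype α] [Fintype β] (A : Matrix α β ℤ) (b : α → ℤ)
    (x : β → ℕ) : Prop :=
  A.mulVec (fun i => (x i : ℤ)) = b

/-- The cost `ω · x` of a solution. -/
def ipCost {β : Type*} [Fintype β] (ω : β → ℝ) (x : β → ℕ) : ℝ := ∑ i, ω i * x i

/-- `x` is an optimal solution of `IP_{A,ω}(b)`. -/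
def IsOptimalSol {α β : Type*} [Fintype α] [Fintype β] (A : Matrix α β ℤ) (ω : β → ℝ)
    (b : α → ℤ) (x : β → ℕ) : Prop :=
  Feasible A b x ∧ ∀ y : β → ℕ, Feasible A b y → ipCost ω x ≤ ipCost ω y

/-- The directed edge relation of the graph `G_{A,ω,b}`: there is an edge from `v` to `u`
whenever `x^{(v-u)⁺} - x^{(v-u)⁻}` belongs to the reduced Gröbner basis `G`. -/
def ipEdge {β : Type*} [Fintype β] (G : Set (MvPolynomial β ℂ)) (v u : β → ℕ) : Prop :=
  binom (fun i => (v i : ℤ) - (u i : ℤ)) ∈ G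

/-!
Every element of the reduced Gröbner basis of `I_A` is a binomial `x^{w⁺} - x^{w⁻}` with leading
monomial `x^{w⁺}`: reducedness leaves a basis element no room for more than its leading monomial
and one monomial of the same `A`-degree, and the two exponents have disjoint supports because a
common variable could be divided out inside `I_A`. Hence every edge strictly decreases `≻`, and
the graph is acyclic. If a feasible `y` is not the `≻`-least feasible point `x₀`, then
`x^y - x^{x₀} ∈ I_A` has leading monomial `x^y`, so some `x^{w⁺}` divides `x^y` and `y - w` is a
feasible out-neighbour of `y`. Descending from any feasible point therefore ends at `x₀`, which is
the unique sink and is optimal because `≻` refines `ω`.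
-/

open Finsupp
open scoped MonomialOrder Matrix

theorem Relation.reflTransGen_of_forall_exists_lt {γ δ : Type*} [LT δ] [WellFoundedLT δ]
    {r : γ → γ → Prop} {p : γ → Prop} (f : γ → δ) {x₀ : γ}
    (h : ∀ y, p y → y ≠ x₀ → ∃ u, p u ∧ r y u ∧ f u < f y) :
    ∀ y, p y → Relation.ReflTransGen r y x₀ := by
  intro y
  induction y using (InvImage.wf f wellFounded_lt).induction with
  | _ y ih =>
    intro hy
    by_cases hyx : y = x₀
    · rw [hyx]
    · obtain ⟨u, hu, hyu, hlt⟩ := h y hy hyx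
      exact .head hyu (ih u hlt hu)

theorem Relation.TransGen.lt_of_forall_lt {γ δ : Type*} [Preorder δ] {r : γ → γ → Prop}
    (f : γ → δ) (h : ∀ a b, r a b → f b < f a) {a b : γ} (hab : Relation.TransGen r a b) :
    f b < f a := by
  induction hab with
  | single hab => exact h _ _ hab
  | tail _ hbc ih => exact (h _ _ hbc).trans ih

section Binomial

variable {σ R : Type*} [CommRing R] {m : MonomialOrder σ} {a c : σ →₀ ℕ}

theorem eq_or_eq_of_mem_support_monomial_sub_monomial {d : σ →₀ ℕ}
    (hd : d ∈ (monomial a (1 : R) - monomial c 1).support) : d = a ∨ d = c := by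
  classical
  rcases Finset.mem_union.mp (MvPolynomial.support_sub σ _ _ hd) with h | h
  · exact .inl (Finset.mem_singleton.mp (support_monomial_subset h))
  · exact .inr (Finset.mem_singleton.mp (support_monomial_subset h))

theorem coeff_monomial_sub_monomial_left (h : a ≠ c) :
    (monomial a (1 : R) - monomial c 1).coeff a = 1 := by
  classical
  simp [coeff_monomial, h.symm]

theorem coeff_monomial_sub_monomial_right (h : a ≠ c) :
    (monomial a (1 : R) - monomial c 1).coeff c = -1 := by
  classical
  simp [coeff_monomial, h]

theorem monomial_sub_monomial_ne_zero [Nontrivial R] (h : a ≠ c) :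
    monomial a (1 : R) - monomial c 1 ≠ 0 := fun h0 => by
  simpa [h0] using coeff_monomial_sub_monomial_left (R := R) h

theorem MonomialOrder.degree_monomial_sub_monomial [Nontrivial R] (h : c ≺[m] a) :
    m.degree (monomial a (1 : R) - monomial c 1) = a := by
  classical
  have hdeg (d : σ →₀ ℕ) : m.degree (monomial d (1 : R)) = d := by
    rw [m.degree_monomial, if_neg one_ne_zero]
  rw [m.degree_sub_of_lt (by rwa [hdeg, hdeg]), hdeg]

theorem MonomialOrder.lt_of_monic_monomial_sub_monomial [NeZero (2 : R)]
    (h : m.Monic (monomial a (1 : R) - monomial c 1)) : c ≺[m] a := by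
  have : Nontrivial R := ⟨⟨2, 0, two_ne_zero⟩⟩
  have hac : a ≠ c := by
    rintro rfl
    simpa using h.ne_zero
  have hdeg := m.degree_mem_support (monomial_sub_monomial_ne_zero (R := R) hac)
  rcases eq_or_eq_of_mem_support_monomial_sub_monomial hdeg with ha | hc
  · have hc : c ∈ (monomial a (1 : R) - monomial c 1).support := by
      simp [MvPolynomial.mem_support_iff, coeff_monomial_sub_monomial_right hac]
    refine lt_of_le_of_ne (ha ▸ m.le_degree hc) fun h' => hac (m.toSyn.injective h').symm
  · have := h.coeff_degree
    rw [hc, coeff_monomial_sub_monomial_right hac] at this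
    exact absurd (by linear_combination -this : (2 : R) = 0) two_ne_zero

end Binomial

section Toric

variable {ι κ : Type*} [Fintype κ] (A : Matrix ι κ ℤ)

def aDegree (a : κ →₀ ℕ) : ι → ℤ := A *ᵥ fun j => (a j : ℤ)

theorem aDegree_add (a c : κ →₀ ℕ) : aDegree A (a + c) = aDegree A a + aDegree A c := by
  simp only [aDegree, ← Matrix.mulVec_add, Finsupp.add_apply, Nat.cast_add]
  rfl

variable [Fintype ι]

theorem phiMap_monomial_s7 (s : κ →₀ ℕ) (r : ℂ) :
    phiMap A (monomial s r) = AddMonoidAlgebra.single (equivFunOnFinite.symm (aDegree A s)) r := by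
  classical
  have hpow (j : κ) : (laurentMonomial fun i => A i j) ^ s j =
      AddMonoidAlgebra.single (equivFunOnFinite.symm fun i => (s j : ℤ) * A i j) (1 : ℂ) := by
    rw [laurentMonomial, AddMonoidAlgebra.single_pow, one_pow]
    congr 1
    ext i
    simp [mul_comm]
  have hsum : ∑ j, equivFunOnFinite.symm (fun i => (s j : ℤ) * A i j) =
      equivFunOnFinite.symm (aDegree A s) := by
    ext i
    simp [Finsupp.finsetSum_apply, aDegree, Matrix.mulVec, dotProduct, mul_comm]
  rw [phiMap, aeval_monomial, Finsupp.prod_fintype _ _ fun j => pow_zero _]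
  simp_rw [hpow]
  rw [AddMonoidAlgebra.prod_single, Finset.prod_const_one, hsum, AddMonoidAlgebra.coe_algebraMap]
  exact (AddMonoidAlgebra.single_mul_single ..).trans (by simp)

theorem monomial_sub_monomial_mem_toricIdeal {a c : κ →₀ ℕ} (h : aDegree A a = aDegree A c) :
    monomial a (1 : ℂ) - monomial c 1 ∈ toricIdeal A := by
  change phiMap A _ = 0
  rw [map_sub, phiMap_monomial_s7, phiMap_monomial_s7, h, sub_self]

theorem exists_aDegree_eq_of_mem_toricIdeal {g : MvPolynomial κ ℂ} (hg : g ∈ toricIdeal A)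
    {a : κ →₀ ℕ} (ha : a ∈ g.support) :
    ∃ c ∈ g.support, c ≠ a ∧ aDegree A c = aDegree A a := by
  classical
  by_contra! hne
  have hcoeff : (phiMap A g).coeff (equivFunOnFinite.symm (aDegree A a)) = g.coeff a := by
    conv_lhs => rw [← g.support_sum_monomial_coeff]
    simp only [map_sum, phiMap_monomial_s7, AddMonoidAlgebra.coeff_sum, Finsupp.finsetSum_apply,
      AddMonoidAlgebra.coeff_single]
    refine (Finset.sum_eq_single_of_mem a ha fun c hc hca => ?_).trans (by simp)
    exact Finsupp.single_eq_of_ne fun h => hne c hc hca (equivFunOnFinite.symm.injective h.symm)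
  rw [show phiMap A g = 0 from hg] at hcoeff
  exact (MvPolynomial.mem_support_iff.mp ha) hcoeff.symm

end Toric

section GroebnerBasis

variable {ι κ : Type*} {m : MonomialOrder κ} {G : Set (MvPolynomial κ ℂ)} {g : MvPolynomial κ ℂ}

theorem IsReducedGroebnerBasis.degree_le_of_mem_support {I : Ideal (MvPolynomial κ ℂ)}
    (hG : IsReducedGroebnerBasis m I G) (hg : g ∈ G) {f : MvPolynomial κ ℂ} (hf : f ∈ I)
    (hf0 : f ≠ 0) {d : κ →₀ ℕ} (hd : d ∈ g.support) (hfd : m.degree f ≤ d) :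
    m.degree g ≤ m.degree f := by
  obtain ⟨g', hg', hle⟩ := hG.1.2.2 f hf hf0
  obtain rfl : g' = g := by_contra fun hne => hG.2.2 g hg g' hg' hne d hd (hle.trans hfd)
  exact hle

variable [Fintype κ]

theorem posPart_sub_add_inf (v u : κ → ℕ) :
    equivFunOnFinite.symm v =
      _root_.posPart (fun i => (v i : ℤ) - u i) + equivFunOnFinite.symm (v ⊓ u) := by
  ext i
  simp [_root_.posPart]

theorem negPart_sub_add_inf (v u : κ → ℕ) :
    equivFunOnFinite.symm u =
      _root_.negPart (fun i => (v i : ℤ) - u i) + equivFunOnFinite.symm (v ⊓ u) := by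
  ext i
  simp [_root_.negPart]
  omega

theorem IsReducedGroebnerBasis.negPart_lt_posPart {I : Ideal (MvPolynomial κ ℂ)}
    (hG : IsReducedGroebnerBasis m I G) {w : κ → ℤ} (hw : binom w ∈ G) :
    negPart w ≺[m] posPart w :=
  m.lt_of_monic_monomial_sub_monomial (hG.2.1 _ hw)

theorem IsReducedGroebnerBasis.lt_of_ipEdge {I : Ideal (MvPolynomial κ ℂ)}
    (hG : IsReducedGroebnerBasis m I G) {v u : κ → ℕ} (h : ipEdge G v u) :
    equivFunOnFinite.symm u ≺[m] equivFunOnFinite.symm v := by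
  rw [posPart_sub_add_inf v u, negPart_sub_add_inf v u, map_add, map_add]
  exact add_lt_add_left (hG.negPart_lt_posPart h) _

variable [Fintype ι] {A : Matrix ι κ ℤ}

theorem IsReducedGroebnerBasis.eq_monomial_sub_monomial
    (hG : IsReducedGroebnerBasis m (toricIdeal A) G) (hg : g ∈ G) :
    ∃ c, c ≺[m] m.degree g ∧ aDegree A (m.degree g) = aDegree A c ∧
      g = monomial (m.degree g) 1 - monomial c 1 := by
  obtain ⟨hgI, hg0⟩ := hG.1.2.1 g hg
  set a := m.degree g
  obtain ⟨c, hc, hca, hAc⟩ :=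
    exists_aDegree_eq_of_mem_toricIdeal A hgI (m.degree_mem_support hg0)
  have hlt : c ≺[m] a := lt_of_le_of_ne (m.le_degree hc) (m.toSyn.injective.ne hca)
  refine ⟨c, hlt, hAc.symm, ?_⟩
  -- otherwise the leading monomial of the remainder `h ∈ I_A` is a monomial of `g` other than `a`
  by_contra hne
  set h := g - (monomial a 1 - monomial c 1)
  have h0 : h ≠ 0 := sub_ne_zero.mpr hne
  have hhI : h ∈ toricIdeal A :=
    sub_mem hgI (monomial_sub_monomial_mem_toricIdeal A hAc.symm)
  have hsupp : h.support ⊆ g.support := by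
    intro d hd
    classical
    rcases Finset.mem_union.mp (MvPolynomial.support_sub κ _ _ hd) with hd | hd
    · exact hd
    · rcases eq_or_eq_of_mem_support_monomial_sub_monomial hd with rfl | rfl
      exacts [m.degree_mem_support hg0, hc]
  have ha : a ∉ h.support := by
    rw [MvPolynomial.mem_support_iff, not_not, coeff_sub,
      coeff_monomial_sub_monomial_left hca.symm, show g.coeff a = 1 from hG.2.1 g hg, sub_self]
  have hdeg := m.degree_mem_support h0
  have hle := hG.degree_le_of_mem_support hg hhI h0 (hsupp hdeg) le_rfl
  have : m.degree h = a :=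
    m.toSyn.injective (le_antisymm (m.le_degree (hsupp hdeg)) (m.toSyn_monotone hle))
  exact ha (this ▸ hdeg)

theorem IsReducedGroebnerBasis.inf_eq_zero_of_eq_monomial_sub_monomial
    (hG : IsReducedGroebnerBasis m (toricIdeal A) G) (hg : g ∈ G) {a c : κ →₀ ℕ}
    (hlt : c ≺[m] a) (hA : aDegree A a = aDegree A c) (hga : g = monomial a 1 - monomial c 1) :
    a ⊓ c = 0 := by
  have hac : a ≠ c := ne_of_apply_ne m.toSyn hlt.ne'
  have hdeg : m.degree g = a := hga ▸ m.degree_monomial_sub_monomial hlt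
  have ha : a ∈ g.support := by
    simp [hga, MvPolynomial.mem_support_iff, coeff_monomial_sub_monomial_left hac]
  have hc : c ∈ g.support := by
    simp [hga, MvPolynomial.mem_support_iff, coeff_monomial_sub_monomial_right hac]
  by_contra hne
  obtain ⟨i, hi⟩ := Finsupp.ne_iff.mp hne
  simp only [Finsupp.inf_apply, Finsupp.coe_zero, Pi.zero_apply] at hi
  obtain ⟨a', rfl⟩ := exists_add_of_le (Finsupp.single_le_iff.mpr (by omega : 1 ≤ a i))
  obtain ⟨c', rfl⟩ := exists_add_of_le (Finsupp.single_le_iff.mpr (by omega : 1 ≤ c i))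
  -- `g = x_i (x^{a'} - x^{c'})`, and the cofactor is still a nonzero element of `I_A`
  have hf0 : monomial a' (1 : ℂ) - monomial c' 1 ≠ 0 :=
    monomial_sub_monomial_ne_zero fun h => hac (h ▸ rfl)
  have hfI : monomial a' (1 : ℂ) - monomial c' 1 ∈ toricIdeal A := by
    simp only [aDegree_add, add_right_inj] at hA
    exact monomial_sub_monomial_mem_toricIdeal A hA
  rcases eq_or_eq_of_mem_support_monomial_sub_monomial (m.degree_mem_support hf0) with hd | hd
  · have := hG.degree_le_of_mem_support hg hfI hf0 ha (by rw [hd]; exact le_add_self) i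
    simp [hdeg, hd] at this
  · have := hG.degree_le_of_mem_support hg hfI hf0 hc (by rw [hd]; exact le_add_self)
    rw [hdeg, hd] at this
    exact not_le.mpr hlt (m.toSyn_monotone (this.trans le_add_self))

theorem IsReducedGroebnerBasis.exists_eq_binom
    (hG : IsReducedGroebnerBasis m (toricIdeal A) G) (hg : g ∈ G) :
    ∃ w, g = binom w ∧ A *ᵥ w = 0 ∧ _root_.posPart w = m.degree g := by
  obtain ⟨c, hlt, hA, hga⟩ := hG.eq_monomial_sub_monomial hg
  have hdisj := hG.inf_eq_zero_of_eq_monomial_sub_monomial hg hlt hA hga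
  set a := m.degree g
  have hi (i : κ) : min (a i) (c i) = 0 := by simpa using DFunLike.congr_fun hdisj i
  have hpos : _root_.posPart (fun i => (a i : ℤ) - c i) = a := by
    ext i; simp [_root_.posPart]; grind
  have hneg : _root_.negPart (fun i => (a i : ℤ) - c i) = c := by
    ext i; simp [_root_.negPart]; grind
  refine ⟨fun i => (a i : ℤ) - c i, by rw [binom, hpos, hneg, hga], ?_, hpos⟩
  change A *ᵥ ((fun i => (a i : ℤ)) - fun i => (c i : ℤ)) = 0
  rw [Matrix.mulVec_sub, sub_eq_zero]
  exact hA

theorem IsReducedGroebnerBasis.exists_ipEdge_of_lt (hG : IsReducedGroebnerBasis m (toricIdeal A) G)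
    {b : ι → ℤ} {x y : κ → ℕ} (hx : Feasible A b x) (hy : Feasible A b y)
    (hlt : equivFunOnFinite.symm x ≺[m] equivFunOnFinite.symm y) :
    ∃ u, Feasible A b u ∧ ipEdge G y u := by
  have hf0 := monomial_sub_monomial_ne_zero (R := ℂ) (ne_of_apply_ne m.toSyn hlt.ne')
  have hfI := monomial_sub_monomial_mem_toricIdeal A (a := equivFunOnFinite.symm y)
    (c := equivFunOnFinite.symm x) (hy.trans hx.symm)
  obtain ⟨g, hg, hle⟩ := hG.1.2.2 _ hfI hf0
  change m.degree g ≤ m.degree _ at hle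
  rw [m.degree_monomial_sub_monomial hlt] at hle
  obtain ⟨w, rfl, hw0, hpos⟩ := hG.exists_eq_binom hg
  have hu (i : κ) : ((((y i : ℤ) - w i).toNat : ℕ) : ℤ) = y i - w i := by
    have := (hpos ▸ hle) i
    simp [_root_.posPart] at this
    omega
  refine ⟨fun i => ((y i : ℤ) - w i).toNat, ?_, ?_⟩
  · change A *ᵥ (fun i => (((y i : ℤ) - w i).toNat : ℤ)) = b
    simp_rw [hu]
    change A *ᵥ ((fun i => (y i : ℤ)) - w) = b
    rw [Matrix.mulVec_sub, hw0, sub_zero]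
    exact hy
  · change binom _ ∈ G
    convert hg using 2
    ext i
    rw [hu]
    ring

end GroebnerBasis

theorem ip_graph_connected_acyclic_unique_sink_general (d n : ℕ) (A : Matrix (Fin d) (Fin n) ℤ)
    (ω : Fin n → ℝ) (m : MonomialOrder (Fin n))
    -- the term order `≻` refines the cost comparison given by `ω`
    (hcomp : ∀ u v : Fin n →₀ ℕ,
      (∑ i, ω i * (u i : ℝ)) < (∑ i, ω i * (v i : ℝ)) → m.toSyn u < m.toSyn v)
    (G : Set (MvPolynomial (Fin n) ℂ))
    (hG : IsReducedGroebnerBasis m (toricIdeal A) G)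
    (b : Fin d → ℤ) (hb : ∃ x : Fin n → ℕ, Feasible A b x) :
    -- connected
    (∀ v u : Fin n → ℕ, Feasible A b v → Feasible A b u →
      Relation.ReflTransGen (fun a c => ipEdge G a c ∨ ipEdge G c a) v u) ∧
    -- acyclic
    (∀ v : Fin n → ℕ, Feasible A b v → ¬ Relation.TransGen (ipEdge G) v v) ∧
    -- unique sink, which is the optimal solution
    (∃ x : Fin n → ℕ, Feasible A b x ∧ (∀ u, Feasible A b u → ¬ ipEdge G x u) ∧
      IsOptimalSol A ω b x ∧
      ∀ y : Fin n → ℕ, Feasible A b y → (∀ u, Feasible A b u → ¬ ipEdge G y u) → y = x) := by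
  let key (x : Fin n → ℕ) : m.syn := m.toSyn (equivFunOnFinite.symm x)
  obtain ⟨x₀, hx₀, hmin⟩ := (InvImage.wf key wellFounded_lt).has_min {x | Feasible A b x} hb
  have hstep (y : Fin n → ℕ) (hy : Feasible A b y) (hne : y ≠ x₀) :
      ∃ u, Feasible A b u ∧ ipEdge G y u ∧ key u < key y := by
    have hlt : key x₀ < key y := (not_lt.mp (hmin y hy)).lt_of_ne fun h =>
      hne (equivFunOnFinite.symm.injective (m.toSyn.injective h)).symm
    obtain ⟨u, hu, hyu⟩ := hG.exists_ipEdge_of_lt hx₀ hy hlt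
    exact ⟨u, hu, hyu, hG.lt_of_ipEdge hyu⟩
  have hpath := Relation.reflTransGen_of_forall_exists_lt key hstep
  have hconn (y : Fin n → ℕ) (hy : Feasible A b y) :
      Relation.ReflTransGen (Relation.SymmGen (ipEdge G)) y x₀ :=
    Relation.ReflTransGen.mono (fun _ _ => Or.inl) _ _ (hpath y hy)
  refine ⟨fun v u hv hu => ?_, fun v _ hvv => ?_, x₀, hx₀, fun u hu hx₀u => ?_, ⟨hx₀, ?_⟩, ?_⟩
  · exact (hconn v hv).trans (symm (hconn u hu))
  · exact lt_irrefl _ (hvv.lt_of_forall_lt key fun _ _ => hG.lt_of_ipEdge)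
  · exact hmin u hu (hG.lt_of_ipEdge hx₀u)
  · exact fun y hy => not_lt.mp fun hlt => hmin y hy (hcomp _ _ hlt)
  · intro y hy hsink
    by_contra hne
    obtain ⟨u, hu, hyu, -⟩ := hstep y hy hne
    exact hsink u hu hyu

/-- For every right-hand side `b ∈ ℕ(A)`, the graph `G_{A,ω,b}` on the feasible
solutions of `IP_{A,ω}(b)`, with a directed edge from `v` to `u` whenever
`x^{(v-u)⁺} - x^{(v-u)⁻} ∈ 𝒢_{A,≻}`, is connected (as an undirected graph), acyclic (as a
directed graph), and has a unique sink, which is the optimal solution of `IP_{A,ω}(b)`. -/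
theorem ip_graph_connected_acyclic_unique_sink (d n : ℕ) (A : Matrix (Fin d) (Fin n) ℤ)
    (hrank : A.rank = d) (hpointed : PointedCone' A) (hrow : RowSpanOne A)
    (ω : Fin n → ℝ) (m : MonomialOrder (Fin n))
    -- the term order `≻` refines the cost comparison given by `ω`
    (hcomp : ∀ u v : Fin n →₀ ℕ,
      (∑ i, ω i * (u i : ℝ)) < (∑ i, ω i * (v i : ℝ)) → m.toSyn u < m.toSyn v)
    -- `ω` is generic: every program in the family `IP_{A,ω}` has a unique optimal solution
    (huniq : ∀ (b : Fin d → ℤ) (x y : Fin n → ℕ),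
      IsOptimalSol A ω b x → IsOptimalSol A ω b y → x = y)
    (G : Set (MvPolynomial (Fin n) ℂ))
    (hG : IsReducedGroebnerBasis m (toricIdeal A) G)
    (b : Fin d → ℤ) (hb : ∃ x : Fin n → ℕ, Feasible A b x) :
    -- connected
    (∀ v u : Fin n → ℕ, Feasible A b v → Feasible A b u →
      Relation.ReflTransGen (fun a c => ipEdge G a c ∨ ipEdge G c a) v u) ∧
    -- acyclic
    (∀ v : Fin n → ℕ, Feasible A b v → ¬ Relation.TransGen (ipEdge G) v v) ∧
    -- unique sink, which is the optimal solution
    (∃ x : Fin n → ℕ, Feasible A b x ∧ (∀ u, Feasible A b u → ¬ ipEdge G x u) ∧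
      IsOptimalSol A ω b x ∧
      ∀ y : Fin n → ℕ, Feasible A b y → (∀ u, Feasible A b u → ¬ ipEdge G y u) → y = x) :=
  ip_graph_connected_acyclic_unique_sink_general d n A ω m hcomp G hG b hb
end
end

section
/- For every circuit $u$ of $A$, the binomial $x^{u_+} - x^{u_-}$ belongs to the universal Gröbner basis $\mathcal{U}_A$ of the toric ideal $I_A$, i.e. it appears in the reduced Gröbner basis of $I_A$ for some term order. -/
open MvPolynomial

noncomputable section

universe u

variable {α β : Type*} [Fintype α] [Fintype β]

/-!
Fix a term order `m` and order monomials first by the weight `w` with `w j = 1` if `u j > 0`,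
`w j = 0` if `u j < 0` and `w j = 1 + |u⁺|` if `u j = 0`, breaking ties by `m`. Then `x^{u⁺}`
leads the binomial, `x^{u⁻}` has weight `0`, and every monomial of weight at most `|u⁺|` lives on
the support of `u`.

If such a monomial `x^c` leads some `f ∈ I_A`, another monomial `x^b` of `f` has the same
`A`-degree and no larger weight, so `c - b` is a kernel vector supported in `supp u`, hence equal
to `k • u` because `u` is a circuit. Since `(1, …, 1)` lies in the row space, `u` has entries of
both signs; so `c ≤ u⁺` forces `k > 0` and `c = u⁺`, while `c = u⁻` forces `k = 0`, which is
absurd. Thus `x^{u⁺}` is a minimal generator of the initial ideal and `x^{u⁻}` is standard, which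
puts the binomial in the reduced Gröbner basis: the monic elements of `I` whose leading monomial
is a minimal generator of the initial ideal and whose other monomials are standard.
-/

lemma finite_setOf_minimal {α : Type*} [PartialOrder α] [WellQuasiOrderedLE α] (P : α → Prop) :
    {x | Minimal P x}.Finite :=
  (setOfPred_minimal_antichain P).finite_of_partiallyWellOrderedOn
    (Set.isPWO_of_wellQuasiOrderedLE _)

lemma Finsupp.weight_mono {σ : Type*} (w : σ → ℕ) : Monotone fun a : σ →₀ ℕ => weight w a :=
  fun a b hab => by
    dsimp only
    rw [← tsub_add_cancel_of_le hab, map_add]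
    exact Nat.le_add_left _ _

namespace MonomialOrder

variable {σ K : Type*} [Field K] (m : MonomialOrder σ) (I : Ideal (MvPolynomial σ K))

def initialExponents : Set (σ →₀ ℕ) := {μ | ∃ f ∈ I, f ≠ 0 ∧ m.degree f = μ}

structure IsReducedMember (g : MvPolynomial σ K) : Prop where
  mem : g ∈ I
  monic : m.Monic g
  notMem_initialExponents : ∀ c ∈ g.support, c ≠ m.degree g → c ∉ m.initialExponents I

def reducedBasis : Set (MvPolynomial σ K) :=
  {g | m.IsReducedMember I g ∧ Minimal (· ∈ m.initialExponents I) (m.degree g)}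

variable {m I}

lemma degree_mem_initialExponents {f : MvPolynomial σ K} (hf : f ∈ I) (hf0 : f ≠ 0) :
    m.degree f ∈ m.initialExponents I :=
  ⟨f, hf, hf0, rfl⟩

lemma isUpperSet_initialExponents : IsUpperSet (m.initialExponents I) := by
  classical
  rintro _ ν hle ⟨f, hf, hf0, rfl⟩
  have hmon : monomial (ν - m.degree f) (1 : K) ≠ 0 := by simp
  refine ⟨monomial (ν - m.degree f) 1 * f, I.mul_mem_left _ hf, mul_ne_zero hmon hf0, ?_⟩
  rw [m.degree_mul hmon hf0, m.degree_monomial, if_neg one_ne_zero, tsub_add_cancel_of_le hle]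

lemma exists_monic_degree_eq {μ : σ →₀ ℕ} (hμ : μ ∈ m.initialExponents I) :
    ∃ f ∈ I, m.Monic f ∧ m.degree f = μ := by
  obtain ⟨f, hf, hf0, rfl⟩ := hμ
  have hc : m.leadingCoeff f ≠ 0 := m.leadingCoeff_ne_zero_iff.mpr hf0
  have hC : (C (m.leadingCoeff f)⁻¹ : MvPolynomial σ K) ≠ 0 := by simpa using hc
  have hdeg : m.degree (C (m.leadingCoeff f)⁻¹ * f) = m.degree f := by
    rw [m.degree_mul hC hf0, m.degree_C, zero_add]
  refine ⟨C (m.leadingCoeff f)⁻¹ * f, I.mul_mem_left _ hf, ?_, hdeg⟩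
  rw [Monic, leadingCoeff, hdeg, coeff_C_mul, ← leadingCoeff, inv_mul_cancel₀ hc]

lemma degree_eq_of_coeff_eq_of_lt {f g : MvPolynomial σ K} {c : σ →₀ ℕ}
    (hc : c ≺[m] m.degree g) (h : ∀ e, c ≺[m] e → f.coeff e = g.coeff e) :
    m.degree f = m.degree g := by
  have hg0 : g ≠ 0 := by
    rintro rfl
    rw [m.degree_zero, map_zero] at hc
    exact not_lt_bot hc
  have hle : m.degree g ≼[m] m.degree f := by
    apply m.le_degree
    rw [mem_support_iff, h _ hc]
    exact m.coeff_degree_ne_zero_iff.mpr hg0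
  refine m.toSyn.injective (le_antisymm ?_ hle)
  by_contra! hlt
  have hf0 : f ≠ 0 := by
    rintro rfl
    exact m.coeff_degree_ne_zero_iff.mpr hg0 (by rw [← h _ hc, coeff_zero])
  exact m.coeff_degree_ne_zero_iff.mpr hf0 (by rw [h _ (hc.trans hlt), m.coeff_eq_zero_of_lt hlt])

lemma exists_coeff_eq_zero_of_mem_initialExponents {g : MvPolynomial σ K} {c : σ →₀ ℕ}
    (hg : g ∈ I) (hc : c ∈ m.initialExponents I) :
    ∃ g' ∈ I, g'.coeff c = 0 ∧ ∀ e, c ≺[m] e → g'.coeff e = g.coeff e := by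
  obtain ⟨h, hh, hmonic, rfl⟩ := exists_monic_degree_eq hc
  refine ⟨g - C (g.coeff (m.degree h)) * h, I.sub_mem hg (I.mul_mem_left _ hh), ?_, ?_⟩
  · rw [coeff_sub, coeff_C_mul, ← leadingCoeff, hmonic.leadingCoeff_eq_one, mul_one, sub_self]
  · intro e he
    rw [coeff_sub, coeff_C_mul, m.coeff_eq_zero_of_lt he, mul_zero, sub_zero]

lemma exists_isReducedMember_degree_eq {μ : σ →₀ ℕ} (hμ : μ ∈ m.initialExponents I) :
    ∃ g, m.IsReducedMember I g ∧ m.degree g = μ := by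
  classical
  -- induction on the largest non-leading monomial of `g` that lies in the initial ideal
  suffices H : ∀ s : m.syn, ∀ g ∈ I, m.Monic g → m.degree g = μ →
      (∀ c ∈ g.support, c ≠ μ → c ∈ m.initialExponents I → m.toSyn c < s) →
      ∃ g, m.IsReducedMember I g ∧ m.degree g = μ by
    obtain ⟨f, hf, hmonic, rfl⟩ := exists_monic_degree_eq hμ
    exact H _ f hf hmonic rfl fun c hc hcμ _ =>
      lt_of_le_of_ne (m.le_degree hc) (m.toSyn.injective.ne hcμ)
  intro s
  induction s using WellFoundedLT.induction with
  | _ s ih =>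
  intro g hg hmonic hdeg hbad
  set bad := g.support.filter fun c => c ≠ μ ∧ c ∈ m.initialExponents I
  rcases bad.eq_empty_or_nonempty with hempty | hne
  · refine ⟨g, ⟨hg, hmonic, fun c hc hcμ hcL => ?_⟩, hdeg⟩
    have : c ∈ bad := Finset.mem_filter.mpr ⟨hc, hdeg ▸ hcμ, hcL⟩
    simp [hempty] at this
  obtain ⟨c, hc, hmax⟩ := bad.exists_max_image m.toSyn hne
  obtain ⟨hcg, hcμ, hcL⟩ := Finset.mem_filter.mp hc
  have hlt : c ≺[m] m.degree g :=
    lt_of_le_of_ne (m.le_degree hcg) (m.toSyn.injective.ne (hdeg ▸ hcμ))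
  obtain ⟨g', hg', hc0, hagree⟩ := exists_coeff_eq_zero_of_mem_initialExponents hg hcL
  have hdeg' : m.degree g' = m.degree g := degree_eq_of_coeff_eq_of_lt hlt hagree
  have hmonic' : m.Monic g' := by
    rw [Monic, leadingCoeff, hdeg', hagree _ hlt]
    exact hmonic
  refine ih _ (hbad c hcg hcμ hcL) g' hg' hmonic' (hdeg'.trans hdeg) fun e he heμ heL => ?_
  by_contra! hce
  rcases hce.lt_or_eq with hce | hce
  · have heg : e ∈ bad := by
      refine Finset.mem_filter.mpr ⟨?_, heμ, heL⟩
      rwa [mem_support_iff, ← hagree e hce, ← mem_support_iff]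
    exact (hmax e heg).not_gt hce
  · rw [mem_support_iff, ← m.toSyn.injective hce] at he
    exact he hc0

lemma IsReducedMember.eq_of_degree_eq {g g' : MvPolynomial σ K} (hg : m.IsReducedMember I g)
    (hg' : m.IsReducedMember I g') (hdeg : m.degree g = m.degree g') : g = g' := by
  by_contra hne
  have hsub : g - g' ≠ 0 := sub_ne_zero.mpr hne
  have hL := degree_mem_initialExponents (m := m) (I.sub_mem hg.mem hg'.mem) hsub
  have hcoeff := m.degree_mem_support hsub
  rw [mem_support_iff, coeff_sub] at hcoeff
  have hμ : m.degree (g - g') ≠ m.degree g := by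
    intro h
    rw [h] at hcoeff
    nth_rw 2 [hdeg] at hcoeff
    rw [← leadingCoeff, ← leadingCoeff, hg.monic.leadingCoeff_eq_one,
      hg'.monic.leadingCoeff_eq_one, sub_self] at hcoeff
    exact hcoeff rfl
  by_cases hgc : g.coeff (m.degree (g - g')) = 0
  · rw [hgc, zero_sub, neg_ne_zero, ← mem_support_iff] at hcoeff
    exact hg'.notMem_initialExponents _ hcoeff (hdeg ▸ hμ) hL
  · exact hg.notMem_initialExponents _ (mem_support_iff.mpr hgc) hμ hL

theorem isReducedGroebnerBasis_reducedBasis [Finite σ] (m : MonomialOrder σ)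
    (I : Ideal (MvPolynomial σ ℂ)) : IsReducedGroebnerBasis m I (m.reducedBasis I) := by
  refine ⟨⟨?_, fun g hg => ⟨hg.1.mem, hg.1.monic.ne_zero⟩, fun f hf hf0 => ?_⟩,
    fun g hg => hg.1.monic, fun g hg g' hg' hne c hcg hle => ?_⟩
  · refine Set.Finite.of_finite_image (f := m.degree)
      ((finite_setOf_minimal (· ∈ m.initialExponents I)).subset ?_) ?_
    · rintro _ ⟨g, hg, rfl⟩
      exact hg.2
    · exact fun g hg g' hg' hdeg => hg.1.eq_of_degree_eq hg'.1 hdeg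
  · obtain ⟨μ, hle, hμ⟩ := exists_minimal_le_of_wellFoundedLT _ _
      (degree_mem_initialExponents (m := m) hf hf0)
    obtain ⟨g, hg, rfl⟩ := exists_isReducedMember_degree_eq hμ.1
    exact ⟨g, ⟨hg, hμ⟩, hle⟩
  · have hL := degree_mem_initialExponents (m := m) hg'.1.mem hg'.1.monic.ne_zero
    by_cases hc : c = m.degree g
    · subst hc
      exact hne (hg'.1.eq_of_degree_eq hg.1 (hg.2.eq_of_le hL hle))
    · exact hg.1.notMem_initialExponents c hcg hc (isUpperSet_initialExponents hle hL)

end MonomialOrder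

namespace MonomialOrder

variable {σ : Type*}

def weightKey (w : σ → ℕ) (m : MonomialOrder σ) : (σ →₀ ℕ) →+ ℕ ×ₗ m.syn where
  toFun a := toLex (Finsupp.weight w a, m.toSyn a)
  map_zero' := by simp
  map_add' a b := by rw [map_add, map_add]; rfl

def ByWeight (_w : σ → ℕ) (_m : MonomialOrder σ) : Type _ := σ →₀ ℕ

namespace ByWeight

variable (w : σ → ℕ) (m : MonomialOrder σ)

instance : AddCommMonoid (ByWeight w m) := inferInstanceAs (AddCommMonoid (σ →₀ ℕ))

instance : LinearOrder (ByWeight w m) :=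
  LinearOrder.lift' (weightKey w m) fun _ _ h => m.toSyn.injective (congrArg (·.2) h)

instance : IsOrderedAddMonoid (ByWeight w m) :=
  Function.Injective.isOrderedAddMonoid (weightKey w m) (map_add _) Iff.rfl

instance : WellFoundedLT (ByWeight w m) := ⟨InvImage.wf (weightKey w m) wellFounded_lt⟩

end ByWeight

def byWeight (w : σ → ℕ) (m : MonomialOrder σ) : MonomialOrder σ where
  syn := ByWeight w m
  toSyn := { toEquiv := Equiv.refl _, map_add' := fun _ _ => rfl }
  toSyn_monotone _ _ hab := Prod.Lex.toLex_mono ⟨Finsupp.weight_mono w hab, m.toSyn_monotone hab⟩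

variable {w : σ → ℕ} {m : MonomialOrder σ} {a b : σ →₀ ℕ}

lemma weight_le_of_byWeight_le (h : a ≼[byWeight w m] b) :
    Finsupp.weight w a ≤ Finsupp.weight w b :=
  Prod.Lex.monotone_fst (weightKey w m a) (weightKey w m b) h

lemma byWeight_lt_of_weight_lt (h : Finsupp.weight w a < Finsupp.weight w b) :
    a ≺[byWeight w m] b :=
  show weightKey w m a < weightKey w m b from Prod.Lex.toLex_lt_toLex.mpr (Or.inl h)

end MonomialOrder

section Binomial

open MonomialOrder

variable {σ : Type*} [Fintype σ]

lemma support_binom_subset (v : σ → ℤ) :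
    (binom v).support ⊆ {_root_.posPart v, _root_.negPart v} := by
  classical
  refine (support_sub _ _ _).trans (Finset.union_subset ?_ ?_) <;>
    refine (support_monomial_subset).trans ?_ <;> simp

lemma MonomialOrder.degree_binom (m : MonomialOrder σ) {v : σ → ℤ}
    (h : _root_.negPart v ≺[m] _root_.posPart v) : m.degree (binom v) = _root_.posPart v := by
  classical
  have h' : m.degree (monomial (_root_.negPart v) (1 : ℂ)) ≺[m]
      m.degree (monomial (_root_.posPart v) (1 : ℂ)) := by
    simpa [m.degree_monomial] using h
  rw [binom, m.degree_sub_of_lt h', m.degree_monomial, if_neg one_ne_zero]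

lemma MonomialOrder.monic_binom (m : MonomialOrder σ) {v : σ → ℤ}
    (h : _root_.negPart v ≺[m] _root_.posPart v) : m.Monic (binom v) := by
  classical
  have h' : m.degree (monomial (_root_.negPart v) (1 : ℂ)) ≺[m]
      m.degree (monomial (_root_.posPart v) (1 : ℂ)) := by
    simpa [m.degree_monomial] using h
  rw [MonomialOrder.Monic, binom, m.leadingCoeff_sub_of_lt h', m.leadingCoeff_monomial]

end Binomial

section Toric

variable {ι σ : Type*} [Fintype ι] [Fintype σ]

def toricDegree (A : Matrix ι σ ℤ) (a : σ →₀ ℕ) : ι →₀ ℤ :=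
  Finsupp.equivFunOnFinite.symm (A.mulVec fun j => (a j : ℤ))

lemma laurentMonomial_pow (a : ι → ℤ) (k : ℕ) :
    laurentMonomial a ^ k = AddMonoidAlgebra.single (k • Finsupp.equivFunOnFinite.symm a) 1 := by
  rw [laurentMonomial, AddMonoidAlgebra.single_pow, one_pow]

lemma phiMap_monomial_s11 (A : Matrix ι σ ℤ) (a : σ →₀ ℕ) (c : ℂ) :
    phiMap A (monomial a c) = AddMonoidAlgebra.single (toricDegree A a) c := by
  classical
  rw [phiMap, aeval_monomial, Finsupp.prod_fintype _ _ fun _ => pow_zero _]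
  simp only [laurentMonomial_pow, AddMonoidAlgebra.prod_single, Finset.prod_const_one]
  have hsum : ∑ j, a j • Finsupp.equivFunOnFinite.symm (fun i => A i j) = toricDegree A a := by
    ext i
    simp [toricDegree, Finset.sum_apply', Matrix.mulVec, dotProduct, mul_comm]
  rw [hsum, Algebra.algebraMap_eq_smul_one, smul_mul_assoc, one_mul,
    AddMonoidAlgebra.smul_single', mul_one]

lemma exists_ne_toricDegree_eq {A : Matrix ι σ ℤ} {f : MvPolynomial σ ℂ}
    (hf : f ∈ toricIdeal A) {c : σ →₀ ℕ} (hc : c ∈ f.support) :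
    ∃ b ∈ f.support, b ≠ c ∧ toricDegree A b = toricDegree A c := by
  classical
  by_contra! hcon
  have hcoeff : (phiMap A f).coeff (toricDegree A c) = f.coeff c := by
    conv_lhs => rw [f.as_sum, map_sum]
    simp only [phiMap_monomial_s11, AddMonoidAlgebra.coeff_sum, AddMonoidAlgebra.coeff_single,
      Finsupp.finsetSum_apply]
    rw [Finset.sum_eq_single_of_mem c hc fun b hb hbc =>
      Finsupp.single_eq_of_ne (hcon b hb hbc).symm]
    exact Finsupp.single_eq_same
  rw [show phiMap A f = 0 from hf] at hcoeff
  exact mem_support_iff.mp hc (by simpa using hcoeff.symm)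

lemma natCast_posPart_sub_negPart (v : σ → ℤ) :
    (fun j => (_root_.posPart v j : ℤ)) - (fun j => (_root_.negPart v j : ℤ)) = v :=
  funext fun j => Int.toNat_sub_toNat_neg (v j)

lemma toricDegree_eq_iff {A : Matrix ι σ ℤ} {a b : σ →₀ ℕ} :
    toricDegree A a = toricDegree A b ↔
      A.mulVec ((fun j => (a j : ℤ)) - fun j => (b j : ℤ)) = 0 := by
  rw [toricDegree, toricDegree, Finsupp.equivFunOnFinite.symm.injective.eq_iff, Matrix.mulVec_sub,
    sub_eq_zero]

lemma binom_mem_toricIdeal_s11 {A : Matrix ι σ ℤ} {v : σ → ℤ} (hv : A.mulVec v = 0) :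
    binom v ∈ toricIdeal A := by
  have hdeg : toricDegree A (_root_.posPart v) = toricDegree A (_root_.negPart v) := by
    rw [toricDegree_eq_iff, natCast_posPart_sub_negPart, hv]
  show phiMap A (binom v) = 0
  rw [binom, map_sub, phiMap_monomial_s11, phiMap_monomial_s11, hdeg, sub_self]

lemma sum_eq_zero_of_mulVec_eq_zero {A : Matrix ι σ ℤ} (hrow : RowSpanOne A) {v : σ → ℤ}
    (hv : A.mulVec v = 0) : ∑ j, v j = 0 := by
  obtain ⟨w, hw⟩ := hrow
  have hvℚ : (A.map (Int.cast : ℤ → ℚ)).mulVec (fun j => (v j : ℚ)) = 0 := by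
    ext i
    simpa [hv, Function.comp_def] using ((Int.castRingHom ℚ).map_mulVec A v i).symm
  have : ((∑ j, v j : ℤ) : ℚ) = 0 := by
    calc ((∑ j, v j : ℤ) : ℚ) = (fun _ : σ => (1 : ℚ)) ⬝ᵥ fun j => (v j : ℚ) := by
          simp [dotProduct]
      _ = w ⬝ᵥ (A.map (Int.cast : ℤ → ℚ)).mulVec (fun j => (v j : ℚ)) := by
        rw [Matrix.dotProduct_mulVec, hw]
      _ = 0 := by rw [hvℚ, dotProduct_zero]
  exact_mod_cast this

end Toric

section IsCircuit

variable {ι σ : Type*} [Fintype σ] {A : Matrix ι σ ℤ} {u : σ → ℤ}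

lemma IsCircuit.exists_eq_smul {v : σ → ℤ} (hu : IsCircuit A u)
    (hv : A.mulVec v = 0) (hsupp : ∀ j, u j = 0 → v j = 0) : ∃ k : ℤ, v = k • u := by
  obtain ⟨-, huA, hgcd, hmin⟩ := hu
  by_cases hv0 : v = 0
  · exact ⟨0, by simp [hv0]⟩
  obtain ⟨j0, hj0⟩ := Function.ne_iff.mp hv0
  have huj0 : u j0 ≠ 0 := fun h => hj0 (hsupp j0 h)
  -- otherwise `v j0 • u - u j0 • v` is a kernel vector supported strictly inside `supp u`
  have hcomb : v j0 • u = u j0 • v := by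
    by_contra hne
    set w := v j0 • u - u j0 • v with hw_def
    have hwA : A.mulVec w = 0 := by
      rw [hw_def, Matrix.mulVec_sub, Matrix.mulVec_smul, Matrix.mulVec_smul, huA, hv, smul_zero,
        smul_zero, sub_zero]
    have hsub : {i | w i ≠ 0} ⊆ {i | u i ≠ 0} := fun i hi hui =>
      hi (by simp [w, hui, hsupp i hui])
    have hj0w : j0 ∈ {i | w i ≠ 0} := (hmin w (sub_ne_zero.mpr hne) hwA hsub).symm ▸ huj0
    exact hj0w (by simp [w, mul_comm])
  have hdvd : u j0 ∣ v j0 := by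
    rw [← dvd_normalize_iff, ← mul_one (normalize (v j0)), ← hgcd, ← Finset.gcd_mul_left]
    exact Finset.dvd_gcd fun j _ => ⟨v j, by simpa using congrFun hcomb j⟩
  obtain ⟨k, hk⟩ := hdvd
  refine ⟨k, funext fun j => mul_left_cancel₀ huj0 ?_⟩
  have hj := congrFun hcomb j
  simp only [Pi.smul_apply, smul_eq_mul] at hj ⊢
  rw [← hj, hk]
  ring

lemma IsCircuit.exists_pos [Fintype ι] (hu : IsCircuit A u)
    (hrow : RowSpanOne A) : ∃ j, 0 < u j := by
  obtain ⟨j, -, hj⟩ := Finset.exists_pos_of_sum_zero_of_exists_nonzero u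
    (sum_eq_zero_of_mulVec_eq_zero hrow hu.2.1)
    (by simpa using Function.ne_iff.mp hu.1)
  exact ⟨j, hj⟩

lemma IsCircuit.exists_neg [Fintype ι] (hu : IsCircuit A u)
    (hrow : RowSpanOne A) : ∃ j, u j < 0 := by
  obtain ⟨j, -, hj⟩ := Finset.exists_pos_of_sum_zero_of_exists_nonzero (-u)
    (by simpa using sum_eq_zero_of_mulVec_eq_zero hrow hu.2.1)
    (by simpa using Function.ne_iff.mp hu.1)
  exact ⟨j, by simpa using hj⟩

end IsCircuit

section CircuitWeight

open MonomialOrder Finsupp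

variable {σ : Type*} [Fintype σ]

def circuitWeight (u : σ → ℤ) (j : σ) : ℕ :=
  if 0 < u j then 1 else if u j < 0 then 0 else 1 + ∑ i, (u i).toNat

lemma weight_circuitWeight_posPart (u : σ → ℤ) :
    weight (circuitWeight u) (_root_.posPart u) = ∑ i, (u i).toNat := by
  rw [weight_eq_sum]
  refine Finset.sum_congr rfl fun j _ => ?_
  simp only [_root_.posPart, Finsupp.coe_equivFunOnFinite_symm, circuitWeight, smul_eq_mul]
  split_ifs
  · rw [mul_one]
  · rw [mul_zero]; omega
  · rw [show (u j).toNat = 0 by omega, zero_mul]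

lemma weight_circuitWeight_negPart (u : σ → ℤ) :
    weight (circuitWeight u) (_root_.negPart u) = 0 := by
  rw [weight_eq_sum]
  refine Finset.sum_eq_zero fun j _ => ?_
  simp only [_root_.negPart, Finsupp.coe_equivFunOnFinite_symm, circuitWeight, smul_eq_mul]
  split_ifs
  · rw [mul_one]; omega
  · rw [mul_zero]
  · rw [show (-u j).toNat = 0 by omega, zero_mul]

lemma eq_zero_of_weight_circuitWeight_le {u : σ → ℤ} {b : σ →₀ ℕ}
    (hb : weight (circuitWeight u) b ≤ weight (circuitWeight u) (_root_.posPart u)) {j : σ}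
    (hj : u j = 0) : b j = 0 := by
  by_contra hbj
  have := (le_weight_of_ne_zero' (circuitWeight u) hbj).trans hb
  simp [circuitWeight, hj, weight_circuitWeight_posPart] at this

lemma eq_zero_of_weight_circuitWeight_eq_zero {u : σ → ℤ} {b : σ →₀ ℕ}
    (hb : weight (circuitWeight u) b = 0) {j : σ} (hj : 0 ≤ u j) : b j = 0 := by
  by_contra hbj
  have := (le_weight_of_ne_zero' (circuitWeight u) hbj).trans hb.le
  simp only [circuitWeight] at this
  split_ifs at this <;> omega

lemma negPart_lt_posPart_circuitWeight {u : σ → ℤ} (hu : ∃ j, 0 < u j) (m : MonomialOrder σ) :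
    _root_.negPart u ≺[byWeight (circuitWeight u) m] _root_.posPart u := by
  apply byWeight_lt_of_weight_lt
  obtain ⟨j, hj⟩ := hu
  rw [weight_circuitWeight_negPart, weight_circuitWeight_posPart]
  exact Finset.sum_pos' (fun _ _ => Nat.zero_le _) ⟨j, Finset.mem_univ _, by omega⟩

end CircuitWeight

section Circuit

open MonomialOrder Finsupp

variable {ι σ : Type*} [Fintype ι] [Fintype σ] {A : Matrix ι σ ℤ} {u : σ → ℤ}
  (m : MonomialOrder σ)

lemma IsCircuit.exists_sub_eq_smul (hu : IsCircuit A u) {c : σ →₀ ℕ}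
    (hc : c ∈ (byWeight (circuitWeight u) m).initialExponents (toricIdeal A))
    (hcw : weight (circuitWeight u) c ≤ weight (circuitWeight u) (_root_.posPart u)) :
    ∃ b ≠ c, weight (circuitWeight u) b ≤ weight (circuitWeight u) c ∧
      ∃ k : ℤ, ∀ j, (c j : ℤ) - b j = k * u j := by
  obtain ⟨f, hf, hf0, rfl⟩ := hc
  obtain ⟨b, hb, hbc, hdeg⟩ := exists_ne_toricDegree_eq hf
    ((byWeight (circuitWeight u) m).degree_mem_support hf0)
  have hbw := weight_le_of_byWeight_le ((byWeight (circuitWeight u) m).le_degree hb)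
  obtain ⟨k, hk⟩ := hu.exists_eq_smul (toricDegree_eq_iff.mp hdeg.symm) fun j hj => by
    simp [eq_zero_of_weight_circuitWeight_le hcw hj,
      eq_zero_of_weight_circuitWeight_le (hbw.trans hcw) hj]
  exact ⟨b, hbc, hbw, k, fun j => congrFun hk j⟩

lemma IsCircuit.posPart_le_of_mem_initialExponents (hu : IsCircuit A u) (hrow : RowSpanOne A)
    {c : σ →₀ ℕ} (hc : c ∈ (byWeight (circuitWeight u) m).initialExponents (toricIdeal A))
    (hle : c ≤ _root_.posPart u) : _root_.posPart u ≤ c := by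
  obtain ⟨b, hbc, -, k, hk⟩ := hu.exists_sub_eq_smul m hc (weight_mono _ hle)
  have hcu : ∀ j, (c j : ℤ) ≤ (u j).toNat := fun j => by exact_mod_cast hle j
  -- at a negative coordinate of `u` the difference `c - b = k • u` is `≤ 0`, forcing `k > 0`
  have hk0 : 0 < k := by
    obtain ⟨jm, hjm⟩ := hu.exists_neg hrow
    rcases lt_trichotomy k 0 with hneg | rfl | hpos
    · have hcjm : (c jm : ℤ) = 0 := by have := hcu jm; omega
      nlinarith [hk jm, (b jm).cast_nonneg (α := ℤ)]
    · exact absurd (Finsupp.ext fun j => by have := hk j; omega) hbc.symm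
    · exact hpos
  intro j
  show (u j).toNat ≤ c j
  have := hk j
  rcases le_or_gt (u j) 0 with hj | hj
  · omega
  · rw [← Nat.cast_le (α := ℤ), Int.toNat_of_nonneg hj.le]
    nlinarith [(b j).cast_nonneg (α := ℤ)]

lemma IsCircuit.negPart_notMem_initialExponents (hu : IsCircuit A u) (hrow : RowSpanOne A) :
    _root_.negPart u ∉ (byWeight (circuitWeight u) m).initialExponents (toricIdeal A) := by
  intro hc
  have hw0 := weight_circuitWeight_negPart u
  obtain ⟨b, hbc, hbw, k, hk⟩ := hu.exists_sub_eq_smul m hc (hw0 ▸ Nat.zero_le _)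
  rw [hw0, Nat.le_zero] at hbw
  -- `b` vanishes wherever `u ≥ 0`, so `k • u = u⁻ - b` vanishes at a positive coordinate of `u`
  have hk0 : k = 0 := by
    obtain ⟨jp, hjp⟩ := hu.exists_pos hrow
    have := hk jp
    rw [eq_zero_of_weight_circuitWeight_eq_zero hbw hjp.le] at this
    have hneg : (_root_.negPart u jp : ℤ) = 0 := by simp [_root_.negPart]; omega
    rw [hneg, Nat.cast_zero, sub_zero] at this
    exact (mul_eq_zero.mp this.symm).resolve_right hjp.ne'
  exact hbc (Finsupp.ext fun j => by have := hk j; rw [hk0, zero_mul] at this; omega)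

lemma IsCircuit.binom_mem_reducedBasis (hu : IsCircuit A u) (hrow : RowSpanOne A) :
    binom u ∈ (byWeight (circuitWeight u) m).reducedBasis (toricIdeal A) := by
  have hlt := negPart_lt_posPart_circuitWeight (hu.exists_pos hrow) m
  have hdeg := degree_binom _ hlt
  have hmem := binom_mem_toricIdeal_s11 hu.2.1
  have hmonic := monic_binom _ hlt
  refine ⟨⟨hmem, hmonic, fun c hc hne => ?_⟩, ?_⟩
  · rw [hdeg] at hne
    have hcneg : c = _root_.negPart u := by simpa [hne] using support_binom_subset u hc
    exact hcneg ▸ hu.negPart_notMem_initialExponents m hrow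
  · rw [hdeg]
    refine ⟨hdeg ▸ degree_mem_initialExponents hmem hmonic.ne_zero, fun c hc hle =>
      hu.posPart_le_of_mem_initialExponents m hrow hc hle⟩

end Circuit

theorem circuit_mem_universalGroebnerBasis_general (d n : ℕ) (A : Matrix (Fin d) (Fin n) ℤ)
    (hrow : RowSpanOne A)
    (u : Fin n → ℤ) (hu : IsCircuit A u) :
    binom u ∈ universalGroebnerBasis (toricIdeal A) :=
  ⟨_, _, MonomialOrder.isReducedGroebnerBasis_reducedBasis _ _,
    hu.binom_mem_reducedBasis MonomialOrder.lex hrow⟩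

/-- For every circuit `u` of `A`, the binomial `x^{u⁺} - x^{u⁻}` belongs to the
universal Gröbner basis of the toric ideal `I_A`, i.e. it appears in the reduced Gröbner
basis of `I_A` for some term order. -/
theorem circuit_mem_universalGroebnerBasis (d n : ℕ) (A : Matrix (Fin d) (Fin n) ℤ)
    (hrank : A.rank = d) (hpointed : PointedCone' A) (hrow : RowSpanOne A)
    (u : Fin n → ℤ) (hu : IsCircuit A u) :
    binom u ∈ universalGroebnerBasis (toricIdeal A) :=
  circuit_mem_universalGroebnerBasis_general d n A hrow u hu
end
end
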